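/- arXiv:2512.07070 — 13 statements merged into one kernel-verified Lean document; each statement's English description precedes it below -/
import Mathlib

section
/- Let B be a finite left regular band monoid, G a finite group acting on B by monoid automorphisms, and k a field with (|G| : k) ≠ 0. Let Q be the quotient of B by the equivalence relation b ≈ b′ ⟺ ∃ g ∈ G, σ(g•b) = σ(b′) (so Q is in bijection with the set Λ(B)/G of G-orbits of supports). Then there is a surjective k-algebra homomorphism from the invariant subalgebra (kB)^G onto the product algebra k^Q (functions Q → k with pointwise operations) whose kernel equals the Jacobson radical of (kB)^G; in particular (kB)^G modulo its Jacobson radical is isomorphic as a k-algebra to k^{Λ(B)/G}. -/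
/-!
Statement 2.  Let `B` be a finite left regular band monoid, `G` a finite group acting on
`B` by monoid automorphisms, and `k` a field with `(|G| : k) ≠ 0`.  Let `Q` be the
quotient of `B` by the relation `b ≈ b′ ⟺ ∃ g, σ(g•b) = σ(b′)` (so `Q ≃ Λ(B)/G`).
Then there is a surjective `k`-algebra homomorphism from the invariant subalgebra
`(kB)^G` onto the product algebra `k^Q` whose kernel equals the Jacobson radical of
`(kB)^G`; in particular `(kB)^G` modulo its Jacobson radical is isomorphic to
`k^{Λ(B)/G}`.
-/

/-- The action of `g : G` on the monoid algebra `k[B]`, permuting the basis `B`. -/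
noncomputable def gAct (k : Type*) [Field k] (B G : Type*) [Monoid B] [Group G]
    [MulDistribMulAction G B] (g : G) :
    MonoidAlgebra k B ≃ₐ[k] MonoidAlgebra k B :=
  MonoidAlgebra.domCongr k k (MulDistribMulAction.toMulEquiv B g)

/-- The invariant subalgebra `(k[B])^G` of the monoid algebra. -/
noncomputable def invAlg (k : Type*) [Field k] (B G : Type*) [Monoid B] [Group G]
    [MulDistribMulAction G B] : Subalgebra k (MonoidAlgebra k B) where
  carrier := {x | ∀ g : G, gAct k B G g x = x}
  mul_mem' := by
    intro a b ha hb g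
    rw [map_mul, ha g, hb g]
  add_mem' := by
    intro a b ha hb g
    rw [map_add, ha g, hb g]
  algebraMap_mem' := fun r g => (gAct k B G g).commutes r

namespace Stmt2Aux
open scoped Classical
open Finset

section Semi
variable {B G : Type*} [Monoid B]

theorem le_trans' {x y z : B} (h1 : x * y = x) (h2 : y * z = y) : x * z = x := by
  calc x * z = x * y * z := by rw [h1]
    _ = x * (y * z) := mul_assoc ..
    _ = x * y := by rw [h2]
    _ = x := h1

variable [Group G] [MulDistribMulAction G B]

theorem le_smul (g : G) {x y : B} (h : x * y = x) : (g • x) * (g • y) = g • x := by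
  rw [← smul_mul', h]

theorem loop [Fintype G] (hidem : ∀ x : B, x * x = x) {h : G} {a : B}
    (hle : a * (h • a) = a) : (h • a) * a = h • a := by
  have key2 : ∀ n : ℕ, (h • a) * ((h ^ (n + 1)) • a) = h • a := by
    intro n; induction n with
    | zero => rw [pow_one]; exact hidem _
    | succ n ih =>
      have h2 : ((h ^ (n + 1)) • a) * ((h ^ (n + 2)) • a) = (h ^ (n + 1)) • a := by
        have := le_smul (g := h ^ (n + 1)) hle
        rwa [smul_smul, ← pow_succ] at this
      exact le_trans' ih h2
  have hpos : 0 < orderOf h := orderOf_pos h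
  obtain ⟨m, hm⟩ : ∃ m, orderOf h = m + 1 := ⟨orderOf h - 1, by omega⟩
  have hord : h ^ (m + 1) = 1 := by rw [← hm]; exact pow_orderOf_eq_one h
  have := key2 m
  rwa [hord, one_smul] at this

/-- the quotient relation -/
abbrev rr (B G : Type*) [Monoid B] [Group G] [MulDistribMulAction G B] : B → B → Prop :=
  fun a b => ∃ g : G, (g • a) * b = g • a ∧ b * (g • a) = b

/-- the (pre)order relation up to G -/
abbrev Rle (G : Type*) [Group G] [MulDistribMulAction G B] (a c : B) : Prop :=
  ∃ g : G, a * (g • c) = a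

theorem rr_refl (hidem : ∀ x : B, x * x = x) (a : B) : rr B G a a :=
  ⟨1, by simp [hidem]⟩

theorem rr_symm {a b : B} : rr B G a b → rr B G b a := by
  rintro ⟨g, h1, h2⟩
  refine ⟨g⁻¹, ?_, ?_⟩
  · have := le_smul (g := g⁻¹) h2
    rwa [inv_smul_smul] at this
  · have := le_smul (g := g⁻¹) h1
    rwa [inv_smul_smul] at this

theorem rr_trans {a b c : B} : rr B G a b → rr B G b c → rr B G a c := by
  rintro ⟨g, h1, h2⟩ ⟨u, h3, h4⟩
  refine ⟨u * g, ?_, ?_⟩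
  · rw [mul_smul]
    exact le_trans' (le_smul u h1) h3
  · rw [mul_smul]
    exact le_trans' h4 (le_smul u h2)

theorem rr_equiv (hidem : ∀ x : B, x * x = x) :
    Equivalence (rr B G) :=
  ⟨rr_refl hidem, rr_symm, rr_trans⟩

theorem Rle_refl (hidem : ∀ x : B, x * x = x) (a : B) : Rle G a a :=
  ⟨1, by simp [hidem]⟩

theorem Rle_trans {a b c : B} : Rle G a b → Rle G b c → Rle G a c := by
  rintro ⟨g, h1⟩ ⟨u, h2⟩
  exact ⟨g * u, by rw [mul_smul]; exact le_trans' h1 (le_smul g h2)⟩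

theorem Rle_congr_left {a a' c : B} (h : rr B G a a') : Rle G a c → Rle G a' c := by
  rintro ⟨u, hu⟩
  obtain ⟨g, hg1, hg2⟩ := h
  exact ⟨g * u, by rw [mul_smul]; exact le_trans' hg2 (le_smul g hu)⟩

theorem Rle_congr_right {a c c' : B} (h : rr B G c c') : Rle G a c → Rle G a c' := by
  rintro ⟨u, hu⟩
  obtain ⟨g, hg1, hg2⟩ := h
  have h3 : c * (g⁻¹ • c') = c := by
    have := le_smul (g := g⁻¹) hg1
    rwa [inv_smul_smul] at this
  exact ⟨u * g⁻¹, by rw [mul_smul]; exact le_trans' hu (le_smul u h3)⟩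

theorem Rle_antisymm [Fintype G] (hidem : ∀ x : B, x * x = x) {b c : B}
    (h1 : Rle G b c) (h2 : Rle G c b) : rr B G b c := by
  obtain ⟨g, h1⟩ := h1
  obtain ⟨u, h2⟩ := h2
  refine ⟨u, ?_, h2⟩
  have h3 : c * ((u * g) • c) = c := by
    rw [mul_smul]; exact le_trans' h2 (le_smul u h1)
  have h4 : ((u * g) • c) * c = (u * g) • c := loop hidem h3
  have h5 : (u • b) * ((u * g) • c) = u • b := by
    rw [mul_smul]; exact le_smul u h1
  exact le_trans' h5 h4

end Semi

section Alg
variable {k B : Type*} [Field k] [Monoid B]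

variable (k) in
/-- the character of `k[B]` attached to (the support of) `a : B` -/
noncomputable def chi (hidem : ∀ x : B, x * x = x) (hlrb : ∀ x y : B, x * y * x = x * y)
    (a : B) : B →* k where
  toFun b := if a * b = a then 1 else 0
  map_one' := by simp
  map_mul' x y := by
    have hiff : a * (x * y) = a ↔ (a * x = a ∧ a * y = a) := by
      constructor
      · intro h
        constructor
        · calc a * x = a * (x * y) * x := by rw [h]
            _ = a * (x * y * x) := by rw [mul_assoc]
            _ = a * (x * y) := by rw [hlrb]
            _ = a := h
        · calc a * y = a * (x * y) * y := by rw [h]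
            _ = a * (x * (y * y)) := by rw [mul_assoc, mul_assoc]
            _ = a * (x * y) := by rw [hidem]
            _ = a := h
      · rintro ⟨h1, h2⟩
        rw [← mul_assoc, h1, h2]
    show (if a * (x * y) = a then (1:k) else 0) =
      (if a * x = a then (1:k) else 0) * (if a * y = a then (1:k) else 0)
    by_cases h : a * (x * y) = a
    · rw [if_pos h, if_pos (hiff.mp h).1, if_pos (hiff.mp h).2, one_mul]
    · rw [if_neg h]
      rcases Decidable.em (a * x = a) with h1 | h1
      · rw [if_pos h1, one_mul, if_neg (fun h2 => h (hiff.mpr ⟨h1, h2⟩))]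
      · rw [if_neg h1, zero_mul]

theorem chi_apply (hidem : ∀ x : B, x * x = x) (hlrb : ∀ x y : B, x * y * x = x * y)
    (a b : B) : chi k hidem hlrb a b = if a * b = a then 1 else 0 := rfl

theorem chi_congr (hidem : ∀ x : B, x * x = x) (hlrb : ∀ x y : B, x * y * x = x * y)
    {a a' : B} (h1 : a * a' = a) (h2 : a' * a = a') :
    chi k hidem hlrb a = chi k hidem hlrb a' := by
  ext b
  simp only [chi_apply]
  congr 1
  refine propext ⟨fun h => ?_, fun h => ?_⟩
  · exact le_trans' h2 h
  · exact le_trans' h1 h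

variable (k) in
/-- the morphism `k[B] → k^B` given by all the characters -/
noncomputable def psi (hidem : ∀ x : B, x * x = x) (hlrb : ∀ x y : B, x * y * x = x * y) :
    MonoidAlgebra k B →ₐ[k] (B → k) where
  toFun x a := MonoidAlgebra.lift k k B (chi k hidem hlrb a) x
  map_one' := funext fun a => map_one _
  map_mul' x y := funext fun a => map_mul _ _ _
  map_zero' := funext fun a => map_zero _
  map_add' x y := funext fun a => map_add _ _ _
  commutes' r := funext fun a => by
    simp [AlgHom.commutes]

theorem psi_single (hidem : ∀ x : B, x * x = x) (hlrb : ∀ x y : B, x * y * x = x * y)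
    (b : B) (r : k) (a : B) :
    psi k hidem hlrb (MonoidAlgebra.single b r) a = if a * b = a then r else 0 := by
  show MonoidAlgebra.lift k k B (chi k hidem hlrb a) (MonoidAlgebra.single b r) = _
  rw [MonoidAlgebra.lift_single, chi_apply, smul_eq_mul, mul_ite, mul_one, mul_zero]

theorem psi_apply_sum [Fintype B] (hidem : ∀ x : B, x * x = x)
    (hlrb : ∀ x y : B, x * y * x = x * y) (y : MonoidAlgebra k B) (a : B) :
    psi k hidem hlrb y a = ∑ b : B, if a * b = a then y.coeff b else 0 := by
  show MonoidAlgebra.lift k k B (chi k hidem hlrb a) y = _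
  rw [MonoidAlgebra.lift_apply, Finsupp.sum_fintype]
  · apply Finset.sum_congr rfl
    intro b _
    rw [chi_apply, smul_eq_mul, mul_ite, mul_one, mul_zero]
  · intro b; exact zero_smul k _

variable {G : Type*} [Group G] [MulDistribMulAction G B]

theorem gAct_single (g : G) (b : B) (r : k) :
    gAct k B G g (MonoidAlgebra.single b r) = MonoidAlgebra.single (g • b) r := by
  show MonoidAlgebra.domCongr k k (MulDistribMulAction.toMulEquiv B g) _ = _
  rw [MonoidAlgebra.domCongr_single]
  rfl

theorem psi_gAct (hidem : ∀ x : B, x * x = x) (hlrb : ∀ x y : B, x * y * x = x * y)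
    (g : G) (x : MonoidAlgebra k B) (a : B) :
    psi k hidem hlrb (gAct k B G g x) a = psi k hidem hlrb x (g⁻¹ • a) := by
  have key : ((Pi.evalAlgHom k (fun _ : B => k) a).comp
      ((psi k hidem hlrb).comp (gAct k B G g).toAlgHom)) =
      (Pi.evalAlgHom k (fun _ : B => k) (g⁻¹ • a)).comp (psi k hidem hlrb) := by
    refine MonoidAlgebra.algHom_ext ?_ (Subsingleton.elim _ _)
    intro b
    simp only [AlgHom.coe_comp, Function.comp_apply, AlgEquiv.toAlgHom_eq_coe,
      AlgHom.coe_coe, AlgEquiv.coe_toAlgHom, Pi.evalAlgHom_apply]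
    rw [gAct_single, psi_single, psi_single]
    congr 1
    refine propext ⟨fun h => ?_, fun h => ?_⟩
    · have := congrArg (fun z => g⁻¹ • z) h
      simpa [smul_mul'] using this
    · have := congrArg (fun z => g • z) h
      simpa [smul_mul'] using this
  simpa using AlgHom.congr_fun key x

theorem psi_invariant (hidem : ∀ x : B, x * x = x) (hlrb : ∀ x y : B, x * y * x = x * y)
    (x : invAlg k B G) (g : G) (a : B) :
    psi k hidem hlrb (x : MonoidAlgebra k B) (g • a) =
      psi k hidem hlrb (x : MonoidAlgebra k B) a := by
  have hx : gAct k B G g⁻¹ (x : MonoidAlgebra k B) = (x : MonoidAlgebra k B) := x.2 g⁻¹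
  have := psi_gAct hidem hlrb g⁻¹ (x : MonoidAlgebra k B) a
  rw [hx, inv_inv] at this
  exact this.symm

variable (k) in
/-- The main algebra homomorphism. -/
noncomputable def phi (hidem : ∀ x : B, x * x = x) (hlrb : ∀ x y : B, x * y * x = x * y) :
    invAlg k B G →ₐ[k]
      ((Quot (fun a b : B => ∃ g : G, (g • a) * b = g • a ∧ b * (g • a) = b)) → k) where
  toFun x q := Quot.liftOn q (fun a => psi k hidem hlrb (x : MonoidAlgebra k B) a)
    (by
      rintro a a' ⟨g, h1, h2⟩
      show psi k hidem hlrb _ a = psi k hidem hlrb _ a'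
      rw [← psi_invariant hidem hlrb x g a]
      show MonoidAlgebra.lift k k B (chi k hidem hlrb (g • a)) _ =
        MonoidAlgebra.lift k k B (chi k hidem hlrb a') _
      rw [chi_congr hidem hlrb h1 h2])
  map_one' := by
    funext q
    induction q using Quot.ind with
    | _ a => show psi k hidem hlrb ((1 : invAlg k B G) : MonoidAlgebra k B) a = 1
             rw [OneMemClass.coe_one, map_one]; rfl
  map_mul' x y := by
    funext q
    induction q using Quot.ind with
    | _ a => show psi k hidem hlrb ((x * y : invAlg k B G) : MonoidAlgebra k B) a = _
             rw [MulMemClass.coe_mul, map_mul]; rfl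
  map_zero' := by
    funext q
    induction q using Quot.ind with
    | _ a => show psi k hidem hlrb ((0 : invAlg k B G) : MonoidAlgebra k B) a = 0
             rw [ZeroMemClass.coe_zero, map_zero]; rfl
  map_add' x y := by
    funext q
    induction q using Quot.ind with
    | _ a => show psi k hidem hlrb ((x + y : invAlg k B G) : MonoidAlgebra k B) a = _
             rw [AddMemClass.coe_add, map_add]; rfl
  commutes' r := by
    funext q
    induction q using Quot.ind with
    | _ a =>
      show psi k hidem hlrb
        ((algebraMap k (invAlg k B G) r : invAlg k B G) : MonoidAlgebra k B) a = _
      rw [Subalgebra.coe_algebraMap, AlgHom.commutes]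
      rfl

theorem phi_mk (hidem : ∀ x : B, x * x = x) (hlrb : ∀ x y : B, x * y * x = x * y)
    (x : invAlg k B G) (a : B) :
    phi k hidem hlrb x (Quot.mk _ a) = psi k hidem hlrb (x : MonoidAlgebra k B) a := rfl

variable [Fintype G]

variable (k) in
/-- the `G`-symmetrized basis elements, elements of the invariant subalgebra -/
noncomputable def Ec (c : B) : invAlg k B G :=
  ⟨∑ g : G, MonoidAlgebra.single (g • c) 1, by
    intro h
    rw [map_sum]
    have hterm : ∀ g : G, gAct k B G h (MonoidAlgebra.single (g • c) (1:k)) =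
        MonoidAlgebra.single ((h * g) • c) 1 := fun g => by rw [gAct_single, mul_smul]
    rw [Finset.sum_congr rfl (fun g _ => hterm g)]
    exact Fintype.sum_equiv (Equiv.mulLeft h) _ _ (fun g => rfl)⟩

theorem phi_Ec (hidem : ∀ x : B, x * x = x) (hlrb : ∀ x y : B, x * y * x = x * y)
    (a c : B) :
    phi k hidem hlrb (Ec k c : invAlg k B G) (Quot.mk (rr B G) a) =
      ∑ g : G, if a * (g • c) = a then (1:k) else 0 := by
  rw [phi_mk]
  show psi k hidem hlrb (∑ g : G, MonoidAlgebra.single (g • c) 1) a = _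
  rw [map_sum, Finset.sum_apply]
  apply Finset.sum_congr rfl
  intro g _
  rw [psi_single]

theorem diag_ne_zero (hidem : ∀ x : B, x * x = x)
    (hchar : (Fintype.card G : k) ≠ 0) (c : B) :
    (∑ g : G, if c * (g • c) = c then (1:k) else 0) ≠ 0 := by
  rw [Finset.sum_boole]
  let H : Subgroup G :=
    { carrier := {g : G | (g • c) * c = g • c ∧ c * (g • c) = c}
      one_mem' := by simp [hidem]
      mul_mem' := by
        rintro a b ⟨ha1, ha2⟩ ⟨hb1, hb2⟩
        constructor
        · rw [mul_smul]
          exact le_trans' (le_smul a hb1) ha1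
        · rw [mul_smul]
          exact le_trans' ha2 (le_smul a hb2)
      inv_mem' := by
        rintro g ⟨hg1, hg2⟩
        constructor
        · have := le_smul (g := g⁻¹) hg2
          rwa [inv_smul_smul] at this
        · have := le_smul (g := g⁻¹) hg1
          rwa [inv_smul_smul] at this }
  have hfeq : univ.filter (fun g : G => c * (g • c) = c) = univ.filter (fun g => g ∈ H) := by
    ext g
    simp only [mem_filter, mem_univ, true_and]
    constructor
    · intro h; exact ⟨loop hidem h, h⟩
    · intro h; exact h.2
  rw [hfeq]
  have hcard : (univ.filter (fun g => g ∈ H)).card = Nat.card H := by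
    rw [Nat.card_eq_fintype_card, Fintype.card_subtype]
  obtain ⟨d, hd⟩ := Subgroup.card_subgroup_dvd_card H
  rw [Nat.card_eq_fintype_card] at hd
  rw [hcard]
  intro h0
  apply hchar
  have hGk : (Fintype.card G : k) = (Nat.card ↥H : k) * (d : k) := by
    exact_mod_cast congrArg (Nat.cast : ℕ → k) hd
  rw [hGk, h0, zero_mul]

end Alg

section Nilp
variable {k B : Type*} [Field k] [Monoid B] [Fintype B]

/-- number of elements weakly below `b` in the support preorder -/
noncomputable def hgt (b : B) : ℕ := (univ.filter (fun x : B => x * b = x)).card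

theorem hgt_pos (hidem : ∀ x : B, x * x = x) (b : B) : 1 ≤ hgt b := by
  refine Finset.card_pos.mpr ⟨b, ?_⟩
  simp [hgt, hidem b]

theorem hgt_le_card (b : B) : hgt b ≤ Fintype.card B := by
  calc hgt b ≤ univ.card := Finset.card_filter_le _ _
    _ = Fintype.card B := Finset.card_univ

theorem hgt_lt (hidem : ∀ x : B, x * x = x) (hlrb : ∀ x y : B, x * y * x = x * y)
    {b c : B} (h : ¬ b * c = b) : hgt (b * c) < hgt b := by
  apply Finset.card_lt_card
  rw [Finset.ssubset_iff_of_subset]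
  · refine ⟨b, ?_, ?_⟩
    · simp [hidem b]
    · simp only [mem_filter, mem_univ, true_and]
      intro hb
      rw [← mul_assoc, hidem b] at hb
      exact h hb
  · intro x hx
    simp only [mem_filter, mem_univ, true_and] at hx ⊢
    exact le_trans' hx (hlrb b c)

variable (k) in
/-- span of differences of basis elements with the same support, bounded height -/
noncomputable def Dspan (n : ℕ) : Submodule k (MonoidAlgebra k B) :=
  Submodule.span k {d | ∃ b c : B, (b * c = b ∧ c * b = c) ∧ hgt b ≤ n ∧
    d = MonoidAlgebra.single b 1 - MonoidAlgebra.single c 1}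

omit [Fintype B] in
theorem ee_mul (hidem : ∀ x : B, x * x = x) (hlrb : ∀ x y : B, x * y * x = x * y)
    {b b' : B} (c : B) (hbb' : b * b' = b) : (b * c) * (b' * c) = b * c := by
  have h1 : (b * c) * b' = b * c := le_trans' (hlrb b c) hbb'
  calc (b * c) * (b' * c) = ((b * c) * b') * c := (mul_assoc (b * c) b' c).symm
    _ = (b * c) * c := by rw [h1]
    _ = b * (c * c) := by rw [mul_assoc]
    _ = b * c := by rw [hidem]

theorem Dspan_mul (hidem : ∀ x : B, x * x = x) (hlrb : ∀ x y : B, x * y * x = x * y)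
    (n m : ℕ) : ∀ x ∈ (Dspan k (n + 1) : Submodule k (MonoidAlgebra k B)),
    ∀ z ∈ (Dspan k m : Submodule k (MonoidAlgebra k B)),
    x * z ∈ (Dspan k n : Submodule k (MonoidAlgebra k B)) := by
  intro x hx
  induction hx using Submodule.span_induction with
  | zero => intro z hz; rw [zero_mul]; exact (Dspan k n).zero_mem
  | add x1 x2 hx1 hx2 ih1 ih2 =>
    intro z hz; rw [add_mul]; exact (Dspan k n).add_mem (ih1 z hz) (ih2 z hz)
  | smul r x1 hx1 ih =>
    intro z hz; rw [smul_mul_assoc]; exact (Dspan k n).smul_mem r (ih z hz)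
  | mem d hd =>
    obtain ⟨b, b', ⟨hbb1, hbb2⟩, hb, rfl⟩ := hd
    intro z hz
    induction hz using Submodule.span_induction with
    | zero => rw [mul_zero]; exact (Dspan k n).zero_mem
    | add z1 z2 hz1 hz2 ih1 ih2 => rw [mul_add]; exact (Dspan k n).add_mem ih1 ih2
    | smul r z1 hz1 ih => rw [mul_smul_comm]; exact (Dspan k n).smul_mem r ih
    | mem d2 hd2 =>
      obtain ⟨c, c', ⟨hcc1, hcc2⟩, hc, rfl⟩ := hd2
      by_cases hbc : b * c = b
      · have h1 : b * c' = b := le_trans' hbc hcc1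
        have h2 : b' * c = b' := le_trans' hbb2 hbc
        have h3 : b' * c' = b' := le_trans' h2 hcc1
        have hz : (MonoidAlgebra.single b (1:k) - MonoidAlgebra.single b' 1) *
            (MonoidAlgebra.single c 1 - MonoidAlgebra.single c' 1) = 0 := by
          simp only [sub_mul, mul_sub, MonoidAlgebra.single_mul_single, one_mul,
            hbc, h1, h2, h3]
          abel
        rw [hz]; exact (Dspan k n).zero_mem
      · have hbc' : ¬ b * c' = b := fun h => hbc (le_trans' h hcc2)
        have key : (MonoidAlgebra.single b (1:k) - MonoidAlgebra.single b' 1) *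
            (MonoidAlgebra.single c 1 - MonoidAlgebra.single c' 1) =
            (MonoidAlgebra.single (b * c) 1 - MonoidAlgebra.single (b' * c) 1) -
            (MonoidAlgebra.single (b * c') 1 - MonoidAlgebra.single (b' * c') 1) := by
          simp only [sub_mul, mul_sub, MonoidAlgebra.single_mul_single, one_mul]
        rw [key]
        have hle : hgt (b * c) ≤ n := by
          have := hgt_lt hidem hlrb hbc; omega
        have hle' : hgt (b * c') ≤ n := by
          have := hgt_lt hidem hlrb hbc'; omega
        refine Submodule.sub_mem _ (Submodule.subset_span ?_) (Submodule.subset_span ?_)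
        · exact ⟨b * c, b' * c, ⟨ee_mul hidem hlrb c hbb1, ee_mul hidem hlrb c hbb2⟩, hle, rfl⟩
        · exact ⟨b * c', b' * c', ⟨ee_mul hidem hlrb c' hbb1, ee_mul hidem hlrb c' hbb2⟩,
            hle', rfl⟩

theorem Dspan_zero (hidem : ∀ x : B, x * x = x) :
    Dspan k (0 : ℕ) = (⊥ : Submodule k (MonoidAlgebra k B)) := by
  rw [eq_bot_iff, Dspan, Submodule.span_le]
  rintro d ⟨b, c, _, hb, rfl⟩
  exact absurd (Nat.le_trans (hgt_pos hidem b) hb) (by omega)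

theorem classSum_zero (hidem : ∀ x : B, x * x = x)
    (rep : B → B)
    (hrep1 : ∀ b : B, (rep b) * b = rep b ∧ b * rep b = b)
    (hrep2 : ∀ b c : B, b * c = b → c * b = c → rep b = rep c)
    (y : B → k) (hy : ∀ a : B, (∑ b : B, if a * b = a then y b else 0) = 0) (a : B) :
    ∑ b ∈ univ.filter (fun b => a * b = a ∧ b * a = b), y b = 0 := by
  have hsplit : ∀ a : B,
      (∑ b ∈ univ.filter (fun b => a * b = a ∧ b * a = b), y b) +
      (∑ b ∈ univ.filter (fun b => a * b = a ∧ ¬ b * a = b), y b) = 0 := by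
    intro a
    have h0 : ∑ b ∈ univ.filter (fun b => a * b = a), y b = 0 := by
      rw [Finset.sum_filter]; exact hy a
    have h1 := Finset.sum_filter_add_sum_filter_not (univ.filter (fun b : B => a * b = a))
      (fun b => b * a = b) y
    rw [Finset.filter_filter, Finset.filter_filter] at h1
    rw [h1, h0]
  suffices main : ∀ (n : ℕ) (a : B),
      (univ.filter (fun b => a * b = a ∧ ¬ b * a = b)).card ≤ n →
      ∑ b ∈ univ.filter (fun b => a * b = a ∧ b * a = b), y b = 0 by
    exact main _ a le_rfl
  intro n
  induction n with
  | zero =>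
    intro a ha
    have he : univ.filter (fun b : B => a * b = a ∧ ¬ b * a = b) = ∅ :=
      Finset.card_eq_zero.mp (Nat.le_zero.mp ha)
    have := hsplit a
    rw [he, Finset.sum_empty, add_zero] at this
    exact this
  | succ n ih =>
    intro a ha
    have hstrict : ∑ b ∈ univ.filter (fun b => a * b = a ∧ ¬ b * a = b), y b = 0 := by
      rw [← Finset.sum_fiberwise_of_maps_to
        (fun b _ => Finset.mem_univ (rep b)) y]
      apply Finset.sum_eq_zero
      intro c _
      rcases Finset.eq_empty_or_nonempty
          ((univ.filter (fun b => a * b = a ∧ ¬ b * a = b)).filter (fun b => rep b = c)) with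
        he | ⟨b0, hb0⟩
      · rw [he, Finset.sum_empty]
      · rw [Finset.mem_filter, Finset.mem_filter] at hb0
        obtain ⟨⟨-, hab0, hnb0⟩, hb0rep⟩ := hb0
        have hcb0 : c * b0 = c := by rw [← hb0rep]; exact (hrep1 b0).1
        have hb0c : b0 * c = b0 := by rw [← hb0rep]; exact (hrep1 b0).2
        have hrepc : rep c = c := by
          have := hrep2 c b0 hcb0 hb0c
          rw [hb0rep] at this; exact this
        have hac : a * c = a := le_trans' hab0 hb0c
        have hnca : ¬ c * a = c := fun h => hnb0 (le_trans' hb0c h)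
        have hset : (univ.filter (fun b => a * b = a ∧ ¬ b * a = b)).filter
            (fun b => rep b = c) = univ.filter (fun b => c * b = c ∧ b * c = b) := by
          ext x
          simp only [Finset.mem_filter, Finset.mem_univ, true_and]
          constructor
          · rintro ⟨⟨hax, hnxa⟩, hxrep⟩
            constructor
            · rw [← hxrep]; exact (hrep1 x).1
            · rw [← hxrep]; exact (hrep1 x).2
          · rintro ⟨hcx, hxc⟩
            refine ⟨⟨le_trans' hac hcx, fun hxa => hnca (le_trans' hcx hxa)⟩, ?_⟩
            rw [hrep2 x c hxc hcx, hrepc]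
        rw [hset]
        apply ih c
        have hsub : univ.filter (fun b : B => c * b = c ∧ ¬ b * c = b) ⊆
            univ.filter (fun b : B => a * b = a ∧ ¬ b * a = b) := by
          intro x hx
          simp only [Finset.mem_filter, Finset.mem_univ, true_and] at hx ⊢
          exact ⟨le_trans' hac hx.1, fun hxa => hx.2 (le_trans' hxa hac)⟩
        have hlt : (univ.filter (fun b : B => c * b = c ∧ ¬ b * c = b)).card <
            (univ.filter (fun b : B => a * b = a ∧ ¬ b * a = b)).card := by
          apply Finset.card_lt_card
          rw [Finset.ssubset_iff_of_subset hsub]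
          refine ⟨c, ?_, ?_⟩
          · simp only [Finset.mem_filter, Finset.mem_univ, true_and]
            exact ⟨hac, hnca⟩
          · simp only [Finset.mem_filter, Finset.mem_univ, true_and, not_and, not_not]
            intro _; exact hidem c
        omega
    have := hsplit a
    rw [hstrict, add_zero] at this
    exact this

theorem mem_Dspan (hidem : ∀ x : B, x * x = x) (hlrb : ∀ x y : B, x * y * x = x * y)
    (y : MonoidAlgebra k B) (hy : ∀ a, psi k hidem hlrb y a = 0) :
    y ∈ (Dspan k (Fintype.card B) : Submodule k (MonoidAlgebra k B)) := by
  let s : Setoid B := ⟨fun b c => b * c = b ∧ c * b = c,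
    ⟨fun b => ⟨hidem b, hidem b⟩, fun h => ⟨h.2, h.1⟩,
     fun h1 h2 => ⟨le_trans' h1.1 h2.1, le_trans' h2.2 h1.2⟩⟩⟩
  let rep : B → B := fun b => (Quotient.mk s b).out
  have hrep1 : ∀ b : B, rep b * b = rep b ∧ b * rep b = b := by
    intro b
    have h := @Quotient.mk_out B s b
    exact ⟨h.1, h.2⟩
  have hrep2 : ∀ b c : B, b * c = b → c * b = c → rep b = rep c := by
    intro b c h1 h2
    show (Quotient.mk s b).out = (Quotient.mk s c).out
    congr 1
    exact Quotient.sound ⟨h1, h2⟩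
  have hcs : ∀ a : B, ∑ b ∈ univ.filter (fun b => a * b = a ∧ b * a = b), (y.coeff b) = 0 :=
    classSum_zero hidem rep hrep1 hrep2 (fun b => y.coeff b)
      (fun a => by rw [← psi_apply_sum hidem hlrb y a]; exact hy a)
  have hrepr : (∑ b : B, MonoidAlgebra.single b (y.coeff b)) = y := by
    ext a
    rw [MonoidAlgebra.coeff_sum, Finset.sum_apply']
    simp [MonoidAlgebra.coeff_single, Finsupp.single_apply]
  have h2 : (∑ b : B, MonoidAlgebra.single (rep b) (y.coeff b)) = 0 := by
    rw [← Finset.sum_fiberwise_of_maps_to (fun b _ => Finset.mem_univ (rep b))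
      (fun b => MonoidAlgebra.single (rep b) (y.coeff b))]
    apply Finset.sum_eq_zero
    intro c _
    rcases Finset.eq_empty_or_nonempty (univ.filter (fun b => rep b = c)) with he | ⟨b0, hb0⟩
    · rw [he, Finset.sum_empty]
    · have hb0rep : rep b0 = c := (Finset.mem_filter.mp hb0).2
      have hcb0 : c * b0 = c := by rw [← hb0rep]; exact (hrep1 b0).1
      have hb0c : b0 * c = b0 := by rw [← hb0rep]; exact (hrep1 b0).2
      have hrepc : rep c = c := by
        have := hrep2 c b0 hcb0 hb0c
        rw [hb0rep] at this; exact this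
      have hstep : ∀ b ∈ univ.filter (fun b => rep b = c),
          MonoidAlgebra.single (rep b) (y.coeff b) = MonoidAlgebra.singleAddHom c (y.coeff b) := by
        intro b hb; rw [(Finset.mem_filter.mp hb).2]; rfl
      rw [Finset.sum_congr rfl hstep]
      have hset : univ.filter (fun b : B => rep b = c) =
          univ.filter (fun b : B => c * b = c ∧ b * c = b) := by
        ext x
        simp only [Finset.mem_filter, Finset.mem_univ, true_and]
        constructor
        · intro hx
          exact ⟨by rw [← hx]; exact (hrep1 x).1, by rw [← hx]; exact (hrep1 x).2⟩
        · rintro ⟨hcx, hxc⟩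
          rw [hrep2 x c hxc hcx, hrepc]
      rw [hset, ← map_sum (MonoidAlgebra.singleAddHom c) (fun b => y.coeff b)
        (univ.filter (fun b : B => c * b = c ∧ b * c = b)), hcs c, map_zero]
  have hdecomp : y =
      ∑ b : B, (MonoidAlgebra.single b (y.coeff b) - MonoidAlgebra.single (rep b) (y.coeff b)) := by
    rw [Finset.sum_sub_distrib, h2, sub_zero, hrepr]
  rw [hdecomp]
  apply Submodule.sum_mem
  intro b _
  have hsm : MonoidAlgebra.single b (y.coeff b) - MonoidAlgebra.single (rep b) (y.coeff b)
      = (y.coeff b) • (MonoidAlgebra.single b (1:k) - MonoidAlgebra.single (rep b) 1) := by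
    rw [smul_sub, MonoidAlgebra.smul_single, MonoidAlgebra.smul_single, smul_eq_mul, mul_one]
  rw [hsm]
  exact Submodule.smul_mem _ _ (Submodule.subset_span
    ⟨b, rep b, ⟨(hrep1 b).2, (hrep1 b).1⟩, hgt_le_card b, rfl⟩)

theorem pow_zero_of_psi_zero (hidem : ∀ x : B, x * x = x)
    (hlrb : ∀ x y : B, x * y * x = x * y) (y : MonoidAlgebra k B)
    (hy : ∀ a, psi k hidem hlrb y a = 0) : y ^ (Fintype.card B + 1) = 0 := by
  have h1 : y ∈ (Dspan k (Fintype.card B) : Submodule k (MonoidAlgebra k B)) :=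
    mem_Dspan hidem hlrb y hy
  have key : ∀ i : ℕ, i ≤ Fintype.card B →
      y ^ (i + 1) ∈ (Dspan k (Fintype.card B - i) : Submodule k (MonoidAlgebra k B)) := by
    intro i
    induction i with
    | zero => intro _; rw [pow_one]; simpa using h1
    | succ i ih =>
      intro hi
      have hii : i ≤ Fintype.card B := by omega
      have heq : Fintype.card B - i = (Fintype.card B - (i + 1)) + 1 := by omega
      have hmul := Dspan_mul hidem hlrb (Fintype.card B - (i + 1)) (Fintype.card B)
        (y ^ (i + 1)) (by rw [← heq]; exact ih hii) y h1
      rw [← pow_succ] at hmul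
      exact hmul
  have h0 := key (Fintype.card B) le_rfl
  rw [Nat.sub_self, Dspan_zero hidem] at h0
  simpa using h0

end Nilp
end Stmt2Aux

set_option maxHeartbeats 1000000 in
set_option synthInstance.maxHeartbeats 1000000 in
open Stmt2Aux Finset in
theorem stmt2 (k B G : Type*) [Field k] [Monoid B] [Fintype B] [Group G] [Fintype G]
    [MulDistribMulAction G B]
    (hidem : ∀ x : B, x * x = x) (hlrb : ∀ x y : B, x * y * x = x * y)
    (hchar : (Fintype.card G : k) ≠ 0) :
    ∃ φ : invAlg k B G →ₐ[k]
        ((Quot (fun a b : B => ∃ g : G, (g • a) * b = g • a ∧ b * (g • a) = b)) → k),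
      Function.Surjective φ ∧
      RingHom.ker φ = Ideal.jacobson (⊥ : Ideal (invAlg k B G)) := by
  classical
  haveI : Fintype (Quot (rr B G)) := Fintype.ofSurjective _ (Quot.mk_surjective (r := rr B G))
  refine ⟨phi k hidem hlrb, ?_, ?_⟩
  · -- surjectivity
    let δ : Quot (rr B G) → (Quot (rr B G) → k) := fun q0 q => if q = q0 then 1 else 0
    let V : Submodule k (Quot (rr B G) → k) := LinearMap.range (phi k hidem hlrb).toLinearMap
    have hVmem : ∀ f, f ∈ V → ∃ x, phi k hidem hlrb x = f := by
      rintro f ⟨x, hx⟩; exact ⟨x, hx⟩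
    have hkey : ∀ (n : ℕ) (c : B),
        (univ.filter (fun q : Quot (rr B G) =>
          ∃ b : B, Quot.mk (rr B G) b = q ∧ Rle G b c)).card ≤ n →
        δ (Quot.mk (rr B G) c) ∈ V := by
      intro n
      induction n with
      | zero =>
        intro c hc
        exfalso
        have hmem : Quot.mk (rr B G) c ∈ univ.filter (fun q : Quot (rr B G) =>
            ∃ b : B, Quot.mk (rr B G) b = q ∧ Rle G b c) := by
          simp only [mem_filter, mem_univ, true_and]
          exact ⟨c, rfl, Rle_refl hidem c⟩
        have := Finset.card_pos.mpr ⟨_, hmem⟩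
        omega
      | succ n ih =>
        intro c hc
        set u := phi k hidem hlrb (Ec k c : invAlg k B G) with hu
        have huval : ∀ a : B, u (Quot.mk (rr B G) a) =
            ∑ g : G, if a * (g • c) = a then (1:k) else 0 := fun a => phi_Ec hidem hlrb a c
        have huc : u (Quot.mk (rr B G) c) ≠ 0 := by
          rw [huval c]; exact diag_ne_zero hidem hchar c
        have huV : u ∈ V := ⟨Ec k c, rfl⟩
        have hexpand : u = ∑ q : Quot (rr B G), u q • δ q := by
          funext q'
          rw [Finset.sum_apply]
          simp only [Pi.smul_apply, δ, smul_eq_mul, mul_ite, mul_one, mul_zero]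
          rw [Finset.sum_ite_eq univ q' u]
          simp
        have hexp : u = (u (Quot.mk (rr B G) c)) • δ (Quot.mk (rr B G) c) +
            ∑ q ∈ univ.erase (Quot.mk (rr B G) c), (u q) • δ q :=
          hexpand.trans (Finset.add_sum_erase univ (fun q => u q • δ q)
            (mem_univ (Quot.mk (rr B G) c))).symm
        have hrest : ∀ q ∈ univ.erase (Quot.mk (rr B G) c), u q • δ q ∈ V := by
          intro q hq
          have hqne : q ≠ Quot.mk (rr B G) c := (Finset.mem_erase.mp hq).1
          by_cases hz : u q = 0
          · rw [hz, zero_smul]; exact V.zero_mem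
          · obtain ⟨a, rfl⟩ := Quot.exists_rep q
            have hRle : Rle G a c := by
              by_contra hn
              apply hz
              rw [huval a]
              apply Finset.sum_eq_zero
              intro g _
              rw [if_neg (fun h => hn ⟨g, h⟩)]
            have hmono : univ.filter (fun q : Quot (rr B G) =>
                ∃ b : B, Quot.mk (rr B G) b = q ∧ Rle G b a) ⊆
                univ.filter (fun q : Quot (rr B G) =>
                ∃ b : B, Quot.mk (rr B G) b = q ∧ Rle G b c) := by
              intro q' hq'
              simp only [mem_filter, mem_univ, true_and] at hq' ⊢
              obtain ⟨b, hb, hba⟩ := hq'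
              exact ⟨b, hb, Rle_trans hba hRle⟩
            have hlt : (univ.filter (fun q : Quot (rr B G) =>
                ∃ b : B, Quot.mk (rr B G) b = q ∧ Rle G b a)).card <
                (univ.filter (fun q : Quot (rr B G) =>
                ∃ b : B, Quot.mk (rr B G) b = q ∧ Rle G b c)).card := by
              apply Finset.card_lt_card
              rw [Finset.ssubset_iff_of_subset hmono]
              refine ⟨Quot.mk (rr B G) c, ?_, ?_⟩
              · simp only [mem_filter, mem_univ, true_and]
                exact ⟨c, rfl, Rle_refl hidem c⟩
              · simp only [mem_filter, mem_univ, true_and]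
                rintro ⟨b, hb, hba⟩
                have hrbc : rr B G b c :=
                  (Equivalence.eqvGen_iff (rr_equiv hidem)).mp (Quot.eq.mp hb)
                have hca : Rle G c a := Rle_congr_left hrbc hba
                have hac : rr B G a c := Rle_antisymm hidem hRle hca
                exact hqne (Quot.sound hac)
            exact V.smul_mem _ (ih a (by omega))
        have hVsum : ∑ q ∈ univ.erase (Quot.mk (rr B G) c), u q • δ q ∈ V :=
          Submodule.sum_mem _ hrest
        have h5 : u - ∑ q ∈ univ.erase (Quot.mk (rr B G) c), u q • δ q =
            (u (Quot.mk (rr B G) c)) • δ (Quot.mk (rr B G) c) := sub_eq_of_eq_add hexp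
        have hsolve : δ (Quot.mk (rr B G) c) = (u (Quot.mk (rr B G) c))⁻¹ •
            (u - ∑ q ∈ univ.erase (Quot.mk (rr B G) c), u q • δ q) := by
          rw [h5, smul_smul, inv_mul_cancel₀ huc, one_smul]
        rw [hsolve]
        exact V.smul_mem _ (V.sub_mem huV hVsum)
    intro f
    have hfV : f ∈ V := by
      have hf : f = ∑ q : Quot (rr B G), f q • δ q := by
        funext q'
        rw [Finset.sum_apply]
        simp only [Pi.smul_apply, δ, smul_eq_mul, mul_ite, mul_one, mul_zero]
        rw [Finset.sum_ite_eq univ q' f]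
        simp
      rw [hf]
      apply Submodule.sum_mem
      intro q _
      obtain ⟨c, rfl⟩ := Quot.exists_rep q
      exact V.smul_mem _ (hkey _ c le_rfl)
    exact hVmem f hfV
  · -- kernel = jacobson radical
    have hjac : Ideal.jacobson (⊥ : Ideal (invAlg k B G)) =
        sInf {J : Ideal (invAlg k B G) | ⊥ ≤ J ∧ J.IsMaximal} := rfl
    apply le_antisymm
    · -- ker ≤ jacobson
      intro x hx
      have hx0 : phi k hidem hlrb x = 0 := hx
      rw [hjac, Submodule.mem_sInf]
      rintro J ⟨-, hJmax⟩
      by_contra hxJ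
      have hco : IsCoatom J := Ideal.isMaximal_def.mp hJmax
      have hlt : J < J ⊔ Ideal.span {x} := by
        refine lt_of_le_of_ne le_sup_left (fun h => hxJ ?_)
        rw [h]
        exact Submodule.mem_sup_right (Submodule.mem_span_singleton_self x)
      have htop := hco.2 _ hlt
      have h1 : (1 : invAlg k B G) ∈ J ⊔ Ideal.span {x} := by
        rw [htop]; exact Submodule.mem_top
      obtain ⟨m, hm, z, hz, hmz⟩ := Submodule.mem_sup.mp h1
      obtain ⟨r, rfl⟩ := Submodule.mem_span_singleton.mp hz
      have hker : phi k hidem hlrb (r • x) = 0 := by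
        rw [smul_eq_mul, map_mul, hx0, mul_zero]
      have hpsi0 : ∀ a : B,
          psi k hidem hlrb ((r • x : invAlg k B G) : MonoidAlgebra k B) a = 0 := by
        intro a
        have := congrFun hker (Quot.mk (rr B G) a)
        rw [phi_mk] at this
        exact this
      have hnil : ((r • x : invAlg k B G) : MonoidAlgebra k B) ^ (Fintype.card B + 1) = 0 :=
        pow_zero_of_psi_zero hidem hlrb _ hpsi0
      have hnil' : (r • x) ^ (Fintype.card B + 1) = (0 : invAlg k B G) := by
        apply Subtype.ext
        push_cast
        exact hnil
      have hunit : IsUnit (1 - r • x : invAlg k B G) :=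
        IsNilpotent.isUnit_one_sub ⟨_, hnil'⟩
      have hmeq : m = 1 - r • x := eq_sub_of_add_eq hmz
      have : J = ⊤ := Ideal.eq_top_of_isUnit_mem J hm (hmeq ▸ hunit)
      exact hco.1 this
    · -- jacobson ≤ ker
      intro x hx
      rw [hjac, Submodule.mem_sInf] at hx
      show x ∈ RingHom.ker (phi k hidem hlrb)
      rw [RingHom.mem_ker]
      funext q
      induction q using Quot.ind with
      | _ a =>
        let ρ : invAlg k B G →+* k :=
          (Pi.evalRingHom (fun _ : Quot (rr B G) => k) (Quot.mk (rr B G) a)).comp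
            (phi k hidem hlrb).toRingHom
        have hρalg : ∀ r : k, ρ (algebraMap k (invAlg k B G) r) = r := by
          intro r
          show (phi k hidem hlrb (algebraMap k (invAlg k B G) r)) (Quot.mk (rr B G) a) = r
          rw [AlgHom.commutes]
          rfl
        have hMmax : (RingHom.ker ρ).IsMaximal := by
          rw [Ideal.isMaximal_def]
          constructor
          · intro h
            have h1 : (1 : invAlg k B G) ∈ RingHom.ker ρ := by
              rw [h]; exact Submodule.mem_top
            rw [RingHom.mem_ker, map_one] at h1
            exact one_ne_zero h1
          · intro J hJ
            obtain ⟨x0, hx0J, hx0M⟩ := SetLike.exists_of_lt hJ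
            have hα : ρ x0 ≠ 0 := fun h => hx0M (by rwa [RingHom.mem_ker])
            have hsub : x0 - algebraMap k (invAlg k B G) (ρ x0) ∈ RingHom.ker ρ := by
              rw [RingHom.mem_ker, map_sub, hρalg, sub_self]
            have halg : algebraMap k (invAlg k B G) (ρ x0) ∈ J := by
              have hdiff := J.sub_mem hx0J (hJ.le hsub)
              simpa using hdiff
            rw [Ideal.eq_top_iff_one]
            have hone : (1 : invAlg k B G) =
                algebraMap k (invAlg k B G) (ρ x0)⁻¹ * algebraMap k (invAlg k B G) (ρ x0) := by
              rw [← map_mul, inv_mul_cancel₀ hα, map_one]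
            rw [hone]
            exact J.mul_mem_left _ halg
        have hxM := hx _ ⟨bot_le, hMmax⟩
        have hρx : ρ x = 0 := by rwa [← RingHom.mem_ker]
        exact hρx
end

section
/- Let B be a finite left regular band monoid, G a finite group acting on B by monoid automorphisms, and k a field with (|G| : k) ≠ 0. Then there exists a family E : B → kB such that: (1) E(b) = E(b′) whenever σ(b) = σ(b′); (2) E(b)*E(b) = E(b) for all b; (3) E(b)*E(b′) = 0 whenever σ(b) ≠ σ(b′); (4) for every support transversal T ⊆ B one has Σ_{t∈T} E(t) = 1; (5) each E(b) satisfies the condition θ(E(b)) = δ_{σ(b)}; (6) g•E(b) = E(g•b) for all g ∈ G and b ∈ B. (That is, kB admits a complete family of primitive orthogonal idempotents indexed by the supports Λ(B) which is permuted by the G-action.) -/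
/-!
Statement 3.  Let `B` be a finite left regular band monoid, `G` a finite group acting on
`B` by monoid automorphisms, and `k` a field with `(|G| : k) ≠ 0`.  Then `kB` admits a
complete family of primitive orthogonal idempotents indexed by the supports `Λ(B)`
which is permuted by the `G`-action: there is a family `E : B → kB` with
(1) `E(b) = E(b′)` whenever `σ(b) = σ(b′)`; (2) each `E(b)` idempotent;
(3) `E(b)*E(b′) = 0` whenever `σ(b) ≠ σ(b′)`; (4) `Σ_{t∈T} E(t) = 1` for every support
transversal `T`; (5) `θ(E(b)) = δ_{σ(b)}`; (6) `g•E(b) = E(g•b)`.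
-/

/-- `σ(a) = σ(b)` in a left regular band: equality of supports. -/
def sameSupp {B : Type*} [Mul B] (a b : B) : Prop := a * b = a ∧ b * a = b



namespace Stmt3Aux

set_option linter.unusedSectionVars false

variable {B : Type*} [Monoid B] [Fintype B] [DecidableEq B]

theorem ss_trans {a b c : B} (h1 : sameSupp a b) (h2 : sameSupp b c) : sameSupp a c := by
  constructor
  · calc a * c = a * b * c := by rw [h1.1]
    _ = a * (b * c) := mul_assoc ..
    _ = a * b := by rw [h2.1]
    _ = a := h1.1
  · calc c * a = c * b * a := by rw [h2.2]
    _ = c * (b * a) := mul_assoc ..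
    _ = c * b := by rw [h1.2]
    _ = c := h2.2

variable (hidem : ∀ x : B, x * x = x)

def suppSetoid : Setoid B :=
  ⟨sameSupp, fun b => ⟨hidem b, hidem b⟩, fun h => ⟨h.2, h.1⟩, ss_trans⟩

abbrev Supp := Quotient (suppSetoid hidem)

attribute [local instance] Classical.propDecidable

noncomputable instance : Fintype (Supp hidem) := by
  classical exact (Quotient.fintype _)

theorem mk_eq_mk {a b : B} : (⟦a⟧ : Supp hidem) = ⟦b⟧ ↔ sameSupp a b := by
  constructor
  · exact fun h => Quotient.exact h
  · exact fun h => Quotient.sound h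

theorem out_mk (a : B) : sameSupp ((⟦a⟧ : Supp hidem).out) a := by
  exact @Quotient.mk_out _ (suppSetoid hidem) a

def Lle (X Y : Supp hidem) : Prop := X.out * Y.out = X.out

theorem le_congr_left {a a' b : B} (h : sameSupp a a') (hab : a * b = a) : a' * b = a' := by
  calc a' * b = a' * a * b := by rw [h.2]
  _ = a' * (a * b) := mul_assoc ..
  _ = a' * a := by rw [hab]
  _ = a' := h.2

theorem le_congr_right {a b b' : B} (h : sameSupp b b') (hab : a * b = a) : a * b' = a := by
  calc a * b' = a * b * b' := by rw [hab]
  _ = a * (b * b') := mul_assoc ..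
  _ = a * b := by rw [h.1]
  _ = a := hab

theorem Lle_mk {a b : B} : Lle hidem ⟦a⟧ ⟦b⟧ ↔ a * b = a := by
  have ha := out_mk hidem a
  have hb := out_mk hidem b
  constructor
  · intro h
    exact le_congr_right hb (le_congr_left ha h)
  · intro h
    exact le_congr_right ((suppSetoid hidem).symm hb)
      (le_congr_left ((suppSetoid hidem).symm ha) h)

theorem Lle_refl (X : Supp hidem) : Lle hidem X X := hidem _

theorem Lle_trans {X Y Z : Supp hidem} (h1 : Lle hidem X Y) (h2 : Lle hidem Y Z) :
    Lle hidem X Z := by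
  unfold Lle at *
  calc X.out * Z.out = X.out * Y.out * Z.out := by rw [h1]
  _ = X.out * (Y.out * Z.out) := mul_assoc ..
  _ = X.out * Y.out := by rw [h2]
  _ = X.out := h1

theorem Lle_antisymm {X Y : Supp hidem} (h1 : Lle hidem X Y) (h2 : Lle hidem Y X) : X = Y := by
  rw [← Quotient.out_eq X, ← Quotient.out_eq Y]
  exact Quotient.sound ⟨h1, h2⟩

def Llt (X Y : Supp hidem) : Prop := Lle hidem X Y ∧ X ≠ Y

theorem Llt_of_le_of_lt {X Y Z : Supp hidem} (h1 : Lle hidem X Y) (h2 : Llt hidem Y Z) :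
    Llt hidem X Z := by
  refine ⟨Lle_trans hidem h1 h2.1, fun hXZ => h2.2 ?_⟩
  exact Lle_antisymm hidem h2.1 (hXZ ▸ h1)

theorem Llt_trans {X Y Z : Supp hidem} (h1 : Llt hidem X Y) (h2 : Llt hidem Y Z) :
    Llt hidem X Z := Llt_of_le_of_lt hidem h1.1 h2

noncomputable def deg (X : Supp hidem) : ℕ :=
  (Finset.univ.filter (fun Y => Llt hidem Y X)).card

theorem deg_lt {X Y : Supp hidem} (h : Llt hidem Y X) : deg hidem Y < deg hidem X := by
  unfold deg
  apply Finset.card_lt_card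
  constructor
  · intro Z hZ
    simp only [Finset.mem_filter, Finset.mem_univ, true_and] at *
    exact Llt_trans hidem hZ h
  · intro hsub
    have := hsub (by simp [h] : Y ∈ Finset.univ.filter (fun Z => Llt hidem Z X))
    simp only [Finset.mem_filter] at this
    exact this.2.2 rfl

end Stmt3Aux
section ActPart
namespace Stmt3Aux
set_option linter.unusedSectionVars false
variable {B : Type*} [Monoid B] [Fintype B] [DecidableEq B]
variable (hidem : ∀ x : B, x * x = x)
variable {G : Type*} [Group G] [Fintype G] [MulDistribMulAction G B]

theorem smul_sameSupp (g : G) {a b : B} (h : sameSupp a b) : sameSupp (g • a) (g • b) :=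
  ⟨by rw [← smul_mul', h.1], by rw [← smul_mul', h.2]⟩

def actQ (g : G) : Supp hidem → Supp hidem :=
  Quotient.map (fun b => g • b) (fun _ _ h => smul_sameSupp g h)

theorem actQ_mk (g : G) (b : B) : actQ hidem g ⟦b⟧ = ⟦g • b⟧ := rfl

theorem actQ_actQ (g h : G) (X : Supp hidem) :
    actQ hidem g (actQ hidem h X) = actQ hidem (g * h) X := by
  induction X using Quotient.ind
  simp only [actQ_mk, mul_smul]

theorem actQ_one (X : Supp hidem) : actQ hidem (1 : G) X = X := by
  induction X using Quotient.ind
  simp only [actQ_mk, one_smul]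

theorem Lle_actQ (g : G) {X Y : Supp hidem} :
    Lle hidem (actQ hidem g X) (actQ hidem g Y) ↔ Lle hidem X Y := by
  induction X using Quotient.ind
  induction Y using Quotient.ind
  rename_i a b
  rw [actQ_mk, actQ_mk, Lle_mk, Lle_mk, ← smul_mul']
  exact ⟨fun h => smul_left_cancel g h, fun h => by rw [h]⟩

theorem Llt_actQ (g : G) {X Y : Supp hidem} :
    Llt hidem (actQ hidem g X) (actQ hidem g Y) ↔ Llt hidem X Y := by
  unfold Llt
  rw [Lle_actQ]
  constructor
  · rintro ⟨h1, h2⟩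
    exact ⟨h1, fun he => h2 (he ▸ rfl)⟩
  · rintro ⟨h1, h2⟩
    refine ⟨h1, fun he => h2 ?_⟩
    have := congrArg (actQ hidem g⁻¹) he
    simpa [actQ_actQ, actQ_one] using this

noncomputable def aelem (g : G) (X : Supp hidem) : B := g • (actQ hidem g⁻¹ X).out

theorem mk_aelem (g : G) (X : Supp hidem) : (⟦aelem hidem g X⟧ : Supp hidem) = X := by
  unfold aelem
  rw [← actQ_mk, Quotient.out_eq, actQ_actQ, mul_inv_cancel, actQ_one]

theorem smul_aelem (g h : G) (X : Supp hidem) :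
    g • aelem hidem h X = aelem hidem (g * h) (actQ hidem g X) := by
  unfold aelem
  rw [smul_smul]
  congr 2
  rw [actQ_actQ]
  congr 1
  group

end Stmt3Aux
end ActPart
section AlgPart
namespace Stmt3Aux
set_option linter.unusedSectionVars false
attribute [local instance] Classical.propDecidable
open MonoidAlgebra Finset

variable {B : Type*} [Monoid B] [Fintype B] [DecidableEq B]
variable (k : Type*) [Field k]
variable (G : Type*) [Group G] [Fintype G] [MulDistribMulAction G B]
variable (hidem : ∀ x : B, x * x = x)

noncomputable def uel (X : Supp hidem) : MonoidAlgebra k B :=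
  (Fintype.card G : k)⁻¹ • ∑ g : G, MonoidAlgebra.single (aelem hidem g X) 1

theorem single_mul_uel_expand (b : B) (X : Supp hidem) :
    MonoidAlgebra.single b (1 : k) * uel k G hidem X =
      (Fintype.card G : k)⁻¹ • ∑ g : G, MonoidAlgebra.single (b * aelem hidem g X) (1 : k) := by
  unfold uel
  rw [mul_smul_comm, Finset.mul_sum]
  congr 1
  refine Finset.sum_congr rfl fun g _ => ?_
  rw [MonoidAlgebra.single_mul_single, one_mul]

theorem single_mul_uel (hchar : (Fintype.card G : k) ≠ 0) {b : B} {X : Supp hidem}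
    (h : (⟦b⟧ : Supp hidem) = X) :
    MonoidAlgebra.single b (1 : k) * uel k G hidem X = MonoidAlgebra.single b 1 := by
  rw [single_mul_uel_expand]
  have : ∀ g : G, b * aelem hidem g X = b := by
    intro g
    have : (⟦b⟧ : Supp hidem) = ⟦aelem hidem g X⟧ := by rw [h, mk_aelem]
    exact ((mk_eq_mk hidem).mp this).1
  rw [Finset.sum_congr rfl fun g _ => by rw [this g]]
  rw [Finset.sum_const, Finset.card_univ, ← Nat.cast_smul_eq_nsmul k, smul_smul,
    inv_mul_cancel₀ hchar, one_smul]

theorem uel_mul_uel (hchar : (Fintype.card G : k) ≠ 0) (X : Supp hidem) :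
    uel k G hidem X * uel k G hidem X = uel k G hidem X := by
  nth_rewrite 1 [uel]
  rw [smul_mul_assoc, Finset.sum_mul]
  rw [Finset.sum_congr rfl fun g _ => single_mul_uel k G hidem hchar (mk_aelem hidem g X)]
  rw [uel]

noncomputable def Fidem (X : Supp hidem) : MonoidAlgebra k B :=
  uel k G hidem X *
    (1 - ∑ Y ∈ (Finset.univ.filter (fun Y => Llt hidem Y X)).attach, Fidem Y.1)
termination_by deg hidem X
decreasing_by
  exact deg_lt hidem (Finset.mem_filter.mp Y.2).2

noncomputable def Tlt (X : Supp hidem) : MonoidAlgebra k B :=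
  ∑ Y ∈ Finset.univ.filter (fun Y => Llt hidem Y X), Fidem k G hidem Y

theorem Fidem_def (X : Supp hidem) :
    Fidem k G hidem X = uel k G hidem X * (1 - Tlt k G hidem X) := by
  rw [Fidem]
  congr 2
  rw [Tlt]
  exact Finset.sum_attach _ _

theorem single_mul_Fidem (hchar : (Fintype.card G : k) ≠ 0) {b : B} {X : Supp hidem}
    (h : (⟦b⟧ : Supp hidem) = X) :
    MonoidAlgebra.single b (1 : k) * Fidem k G hidem X =
      MonoidAlgebra.single b (1 : k) * (1 - Tlt k G hidem X) := by
  rw [Fidem_def, ← mul_assoc, single_mul_uel k G hidem hchar h]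

theorem sum_le_eq_single (hchar : (Fintype.card G : k) ≠ 0) (d : B) :
    ∑ Y ∈ Finset.univ.filter (fun Y => Lle hidem Y ⟦d⟧),
      MonoidAlgebra.single d (1 : k) * Fidem k G hidem Y = MonoidAlgebra.single d 1 := by
  have hsplit : Finset.univ.filter (fun Y => Lle hidem Y ⟦d⟧) =
      insert (⟦d⟧ : Supp hidem) (Finset.univ.filter (fun Y => Llt hidem Y ⟦d⟧)) := by
    ext Y
    simp only [Finset.mem_filter, Finset.mem_univ, true_and, Finset.mem_insert]
    constructor
    · intro h
      by_cases hY : Y = ⟦d⟧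
      · exact Or.inl hY
      · exact Or.inr ⟨h, hY⟩
    · rintro (rfl | ⟨h, _⟩)
      · exact Lle_refl hidem _
      · exact h
  rw [hsplit, Finset.sum_insert (fun h => (Finset.mem_filter.mp h).2.2 rfl)]
  rw [single_mul_Fidem k G hidem hchar rfl, mul_sub, mul_one]
  have : ∑ Y ∈ Finset.univ.filter (fun Y => Llt hidem Y ⟦d⟧),
      MonoidAlgebra.single d (1 : k) * Fidem k G hidem Y =
      MonoidAlgebra.single d (1 : k) * Tlt k G hidem ⟦d⟧ := by
    rw [Tlt, Finset.mul_sum]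
  rw [this, sub_add_cancel]

end Stmt3Aux
end AlgPart
section CorePart
namespace Stmt3Aux
set_option linter.unusedSectionVars false
attribute [local instance] Classical.propDecidable
open MonoidAlgebra Finset

variable {B : Type*} [Monoid B] [Fintype B] [DecidableEq B]
variable (k : Type*) [Field k]
variable (G : Type*) [Group G] [Fintype G] [MulDistribMulAction G B]
variable (hidem : ∀ x : B, x * x = x)

theorem M1 (hlrb : ∀ x y : B, x * y * x = x * y) (hchar : (Fintype.card G : k) ≠ 0)
    (X : Supp hidem) (b : B) (hb : ¬ Lle hidem X ⟦b⟧) :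
    MonoidAlgebra.single b (1 : k) * Fidem k G hidem X = 0 := by
  rw [Fidem_def, ← mul_assoc, single_mul_uel_expand, smul_mul_assoc, Finset.sum_mul]
  have hz : ∀ g : G,
      MonoidAlgebra.single (b * aelem hidem g X) (1 : k) * (1 - Tlt k G hidem X) = 0 := by
    intro g
    have hXa : (⟦aelem hidem g X⟧ : Supp hidem) = X := mk_aelem hidem g X
    set a := aelem hidem g X with ha
    set d := b * a with hd
    have hdX : Llt hidem (⟦d⟧ : Supp hidem) X := by
      constructor
      · rw [← hXa, Lle_mk hidem]
        show b * a * a = b * a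
        rw [mul_assoc, hidem]
      · intro he
        apply hb
        rw [← he, Lle_mk hidem]
        exact hlrb b a
    have key : MonoidAlgebra.single d (1 : k) * Tlt k G hidem X =
        MonoidAlgebra.single d 1 := by
      rw [Tlt, Finset.mul_sum]
      rw [← Finset.sum_filter_add_sum_filter_not
        (Finset.univ.filter (fun Y => Llt hidem Y X)) (fun Y => Lle hidem Y ⟦d⟧)]
      have h1 : (Finset.univ.filter (fun Y => Llt hidem Y X)).filter
            (fun Y => Lle hidem Y ⟦d⟧) =
          Finset.univ.filter (fun Y => Lle hidem Y ⟦d⟧) := by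
        ext Y
        simp only [Finset.mem_filter, Finset.mem_univ, true_and]
        exact ⟨fun h => h.2, fun h => ⟨Llt_of_le_of_lt hidem h hdX, h⟩⟩
      have h2 : ∀ Y ∈ (Finset.univ.filter (fun Y => Llt hidem Y X)).filter
            (fun Y => ¬ Lle hidem Y ⟦d⟧),
          MonoidAlgebra.single d (1 : k) * Fidem k G hidem Y = 0 := by
        intro Y hY
        simp only [Finset.mem_filter, Finset.mem_univ, true_and] at hY
        exact M1 hlrb hchar Y d hY.2
      rw [h1, Finset.sum_eq_zero h2, add_zero, sum_le_eq_single k G hidem hchar d]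
    rw [mul_sub, mul_one, key, sub_self]
  rw [Finset.sum_eq_zero fun g _ => hz g, smul_zero]
termination_by deg hidem X
decreasing_by
  exact deg_lt hidem (Finset.mem_filter.mp (Finset.mem_filter.mp hY).1).2

theorem uel_mul_Fidem (hchar : (Fintype.card G : k) ≠ 0) (X : Supp hidem) :
    uel k G hidem X * Fidem k G hidem X = Fidem k G hidem X := by
  rw [Fidem_def, ← mul_assoc, uel_mul_uel k G hidem hchar]

theorem Fmul (hlrb : ∀ x y : B, x * y * x = x * y) (hchar : (Fintype.card G : k) ≠ 0)
    (X Y : Supp hidem) :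
    Fidem k G hidem X * Fidem k G hidem Y =
      if X = Y then Fidem k G hidem X else 0 := by
  have hT : Tlt k G hidem X * Fidem k G hidem Y =
      if Llt hidem Y X then Fidem k G hidem Y else 0 := by
    rw [Tlt, Finset.sum_mul]
    rw [Finset.sum_congr rfl (fun Z hZ => Fmul hlrb hchar Z Y)]
    rw [Finset.sum_ite_eq']
    simp only [Finset.mem_filter, Finset.mem_univ, true_and]
  rw [Fidem_def k G hidem X, mul_assoc, sub_mul, one_mul, hT]
  by_cases hXY : X = Y
  · subst hXY
    rw [if_neg (fun h => h.2 rfl), sub_zero, uel_mul_Fidem k G hidem hchar, if_pos rfl]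
    exact Fidem_def k G hidem X
  · rw [if_neg hXY]
    by_cases hYX : Llt hidem Y X
    · rw [if_pos hYX, sub_self, mul_zero]
    · have hnle : ¬ Lle hidem Y X := fun h => hYX ⟨h, fun he => hXY he.symm⟩
      rw [if_neg hYX, sub_zero, uel, smul_mul_assoc, Finset.sum_mul,
        Finset.sum_eq_zero (fun g _ => M1 k G hidem hlrb hchar Y (aelem hidem g X)
          (by rw [mk_aelem]; exact hnle)), smul_zero]
termination_by deg hidem X
decreasing_by
  exact deg_lt hidem (Finset.mem_filter.mp hZ).2

theorem sum_all_Fidem (hchar : (Fintype.card G : k) ≠ 0) :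
    ∑ X : Supp hidem, Fidem k G hidem X = 1 := by
  have huniv : Finset.univ.filter (fun Y => Lle hidem Y (⟦(1 : B)⟧ : Supp hidem)) =
      Finset.univ := by
    ext Y
    simp only [Finset.mem_filter, Finset.mem_univ, true_and, iff_true]
    rw [← Quotient.out_eq Y, Lle_mk hidem, mul_one]
  have := sum_le_eq_single k G hidem hchar (1 : B)
  rw [huniv] at this
  calc ∑ X : Supp hidem, Fidem k G hidem X
      = ∑ X : Supp hidem, MonoidAlgebra.single (1 : B) (1 : k) * Fidem k G hidem X := by
        refine Finset.sum_congr rfl fun X _ => ?_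
        rw [← MonoidAlgebra.one_def, one_mul]
    _ = MonoidAlgebra.single (1 : B) 1 := this
    _ = 1 := (MonoidAlgebra.one_def).symm

end Stmt3Aux
end CorePart
section ChiPart
namespace Stmt3Aux
set_option linter.unusedSectionVars false
attribute [local instance] Classical.propDecidable
open MonoidAlgebra Finset

variable {B : Type*} [Monoid B] [Fintype B] [DecidableEq B]
variable (k : Type*) [Field k]
variable (G : Type*) [Group G] [Fintype G] [MulDistribMulAction G B]
variable (hidem : ∀ x : B, x * x = x)

noncomputable def chiHom (hlrb : ∀ x y : B, x * y * x = x * y) (c : B) : B →* k where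
  toFun b := if c * b = c then 1 else 0
  map_one' := by
    show (if c * 1 = c then (1:k) else 0) = 1
    rw [if_pos (mul_one c)]
  map_mul' a b := by
    show (if c * (a * b) = c then (1:k) else 0) =
      (if c * a = c then (1:k) else 0) * (if c * b = c then (1:k) else 0)
    by_cases ha : c * a = c
    · by_cases hb2 : c * b = c
      · rw [if_pos, if_pos ha, if_pos hb2, one_mul]
        rw [← mul_assoc, ha, hb2]
      · rw [if_neg, if_pos ha, one_mul, if_neg hb2]
        intro h
        apply hb2
        calc c * b = c * (a * b) * b := by rw [h]
        _ = c * (a * (b * b)) := by rw [mul_assoc, mul_assoc]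
        _ = c * (a * b) := by rw [hidem]
        _ = c := h
    · rw [if_neg, if_neg ha, zero_mul]
      intro h
      apply ha
      calc c * a = c * (a * b) * a := by rw [h]
      _ = c * (a * b * a) := mul_assoc ..
      _ = c * (a * b) := by rw [hlrb]
      _ = c := h

noncomputable def chi (hlrb : ∀ x y : B, x * y * x = x * y) (c : B) :
    MonoidAlgebra k B →ₐ[k] k :=
  MonoidAlgebra.lift k k B (chiHom k hidem hlrb c)

theorem chi_sum_coeff (hlrb : ∀ x y : B, x * y * x = x * y) (c : B)
    (e : MonoidAlgebra k B) :
    ∑ b ∈ Finset.univ.filter (fun b => c * b = c), e.coeff b = chi k hidem hlrb c e := by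
  rw [chi, MonoidAlgebra.lift_apply, Finsupp.sum]
  have h1 : ∀ b : B, e.coeff b • (chiHom k hidem hlrb c b) = if c * b = c then e.coeff b else 0 := by
    intro b
    show e.coeff b • (if c * b = c then (1:k) else 0) = _
    by_cases h : c * b = c
    · rw [if_pos h, if_pos h, smul_eq_mul, mul_one]
    · rw [if_neg h, if_neg h, smul_eq_mul, mul_zero]
  rw [Finset.sum_congr rfl fun b _ => h1 b]
  rw [Finset.sum_filter]
  refine Finset.sum_subset (Finset.subset_univ _) ?_ |>.symm
  intro b _ hb
  rw [Finsupp.notMem_support_iff.mp hb, ite_self]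

theorem chi_single (hlrb : ∀ x y : B, x * y * x = x * y) (c a : B) :
    chi k hidem hlrb c (MonoidAlgebra.single a (1 : k)) =
      if c * a = c then 1 else 0 := by
  rw [chi, MonoidAlgebra.lift_single, one_smul]
  rfl

theorem chi_uel (hlrb : ∀ x y : B, x * y * x = x * y)
    (hchar : (Fintype.card G : k) ≠ 0) (c : B) (X : Supp hidem) :
    chi k hidem hlrb c (uel k G hidem X) = if Lle hidem ⟦c⟧ X then 1 else 0 := by
  rw [uel, map_smul, map_sum]
  have h1 : ∀ g : G, chi k hidem hlrb c (MonoidAlgebra.single (aelem hidem g X) (1 : k)) =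
      if Lle hidem ⟦c⟧ X then 1 else 0 := by
    intro g
    have hiff : Lle hidem (⟦c⟧ : Supp hidem) X ↔ c * aelem hidem g X = c := by
      conv_lhs => rw [← mk_aelem hidem g X]
      exact Lle_mk hidem
    rw [chi_single]
    by_cases h : c * aelem hidem g X = c
    · rw [if_pos h, if_pos (hiff.mpr h)]
    · rw [if_neg h, if_neg (fun hh => h (hiff.mp hh))]
  rw [Finset.sum_congr rfl fun g _ => h1 g, Finset.sum_const, Finset.card_univ,
    ← Nat.cast_smul_eq_nsmul k, smul_smul, inv_mul_cancel₀ hchar, one_smul]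

theorem chi_Fidem (hlrb : ∀ x y : B, x * y * x = x * y)
    (hchar : (Fintype.card G : k) ≠ 0) (X : Supp hidem) (c : B) :
    chi k hidem hlrb c (Fidem k G hidem X) = if (⟦c⟧ : Supp hidem) = X then 1 else 0 := by
  rw [Fidem_def, map_mul, map_sub, map_one, Tlt, map_sum]
  rw [Finset.sum_congr rfl fun Y hY => chi_Fidem hlrb hchar Y c]
  rw [chi_uel k G hidem hlrb hchar]
  by_cases h1 : (⟦c⟧ : Supp hidem) = X
  · subst h1
    rw [if_pos (Lle_refl hidem _), if_pos rfl]
    have : ∀ Y ∈ Finset.univ.filter (fun Y => Llt hidem Y (⟦c⟧ : Supp hidem)),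
        (if (⟦c⟧ : Supp hidem) = Y then (1:k) else 0) = 0 := by
      intro Y hY
      simp only [Finset.mem_filter, Finset.mem_univ, true_and] at hY
      rw [if_neg]
      intro he
      exact hY.2 he.symm
    rw [Finset.sum_eq_zero this, sub_zero, mul_one]
  · rw [if_neg h1]
    by_cases h2 : Lle hidem ⟦c⟧ X
    · rw [if_pos h2]
      have hlt : Llt hidem (⟦c⟧ : Supp hidem) X := ⟨h2, h1⟩
      have : ∑ Y ∈ Finset.univ.filter (fun Y => Llt hidem Y X),
          (if (⟦c⟧ : Supp hidem) = Y then (1:k) else 0) = 1 := by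
        rw [Finset.sum_ite_eq, if_pos
          (by simp only [Finset.mem_filter, Finset.mem_univ, true_and]; exact hlt)]
      rw [this, sub_self, mul_zero]
    · rw [if_neg h2, zero_mul]
termination_by deg hidem X
decreasing_by
  exact deg_lt hidem (Finset.mem_filter.mp hY).2

end Stmt3Aux
end ChiPart
section EquivPart
namespace Stmt3Aux
set_option linter.unusedSectionVars false
attribute [local instance] Classical.propDecidable
open MonoidAlgebra Finset

variable {B : Type*} [Monoid B] [Fintype B] [DecidableEq B]
variable (k : Type*) [Field k]
variable (G : Type*) [Group G] [Fintype G] [MulDistribMulAction G B]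
variable (hidem : ∀ x : B, x * x = x)

noncomputable def Phi (g : G) : MonoidAlgebra k B →+* MonoidAlgebra k B :=
  MonoidAlgebra.mapDomainRingHom k (MulDistribMulAction.toMonoidHom B g)

theorem Phi_apply (g : G) (e : MonoidAlgebra k B) :
    Phi k G g e = MonoidAlgebra.mapDomain (fun a => g • a) e := rfl

theorem Phi_uel (g : G) (X : Supp hidem) :
    Phi k G g (uel k G hidem X) = uel k G hidem (actQ hidem g X) := by
  rw [Phi_apply, uel, MonoidAlgebra.mapDomain_smul, ← Phi_apply, map_sum, uel]
  congr 1
  rw [Finset.sum_congr rfl fun h _ => (Phi_apply k G g _).trans MonoidAlgebra.mapDomain_single]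
  refine Fintype.sum_equiv (Equiv.mulLeft g)
    (fun h => MonoidAlgebra.single (g • aelem hidem h X) 1)
    (fun h => MonoidAlgebra.single (aelem hidem h (actQ hidem g X)) 1) fun h => ?_
  show MonoidAlgebra.single (g • aelem hidem h X) 1 =
    MonoidAlgebra.single (aelem hidem ((Equiv.mulLeft g) h) (actQ hidem g X)) 1
  rw [smul_aelem, Equiv.coe_mulLeft]

theorem Phi_Fidem (g : G) (X : Supp hidem) :
    Phi k G g (Fidem k G hidem X) = Fidem k G hidem (actQ hidem g X) := by
  rw [Fidem_def, mul_sub, mul_one, map_sub, Tlt, Finset.mul_sum, map_sum,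
    Fidem_def k G hidem (actQ hidem g X), mul_sub, mul_one, Tlt, Finset.mul_sum,
    Phi_uel k G hidem g X]
  congr 1
  have hterm : ∀ Y ∈ Finset.univ.filter (fun Y => Llt hidem Y X),
      Phi k G g (uel k G hidem X * Fidem k G hidem Y) =
        uel k G hidem (actQ hidem g X) * Fidem k G hidem (actQ hidem g Y) := by
    intro Y hY
    rw [map_mul, Phi_uel k G hidem g X, Phi_Fidem g Y]
  rw [Finset.sum_congr rfl hterm]
  refine Finset.sum_bij (fun Y _ => actQ hidem g Y) ?_ ?_ ?_ ?_
  · intro Y hY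
    simp only [Finset.mem_filter, Finset.mem_univ, true_and] at hY ⊢
    exact (Llt_actQ hidem g).mpr hY
  · intro Y1 _ Y2 _ he
    have := congrArg (actQ hidem g⁻¹) he
    simpa [actQ_actQ, actQ_one] using this
  · intro Z hZ
    simp only [Finset.mem_filter, Finset.mem_univ, true_and] at hZ
    refine ⟨actQ hidem g⁻¹ Z, ?_, ?_⟩
    · simp only [Finset.mem_filter, Finset.mem_univ, true_and]
      rw [← Llt_actQ hidem g, actQ_actQ, mul_inv_cancel, actQ_one]
      exact hZ
    · show actQ hidem g (actQ hidem g⁻¹ Z) = Z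
      rw [actQ_actQ, mul_inv_cancel, actQ_one]
  · intro Y hY
    rfl
termination_by deg hidem X
decreasing_by
  exact deg_lt hidem (Finset.mem_filter.mp hY).2

end Stmt3Aux
end EquivPart

/-- A subset of `B` containing exactly one element of each `σ`-class. -/
def IsSuppTransversal {B : Type*} [Mul B] (T : Finset B) : Prop :=
  (∀ b : B, ∃ t ∈ T, sameSupp t b) ∧ ∀ t ∈ T, ∀ t' ∈ T, sameSupp t t' → t = t'

/-- `θ(e) = δ_{σ(x₀)}`: for every `c ∈ B`, the sum of the coefficients of `e` over
`{b : c*b = c}` is `1` when `σ(c) = σ(x₀)` and `0` otherwise. -/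
def ThetaDelta {k B : Type*} [Semiring k] [Mul B] [Fintype B] [DecidableEq B]
    (x₀ : B) (e : MonoidAlgebra k B) : Prop :=
  ∀ c : B, (∑ b ∈ Finset.univ.filter fun b => c * b = c, e.coeff b) =
    if c * x₀ = c ∧ x₀ * c = x₀ then 1 else 0

theorem stmt3 (k B G : Type*) [Field k] [Monoid B] [Fintype B] [DecidableEq B]
    [Group G] [Fintype G] [MulDistribMulAction G B]
    (hidem : ∀ x : B, x * x = x) (hlrb : ∀ x y : B, x * y * x = x * y)
    (hchar : (Fintype.card G : k) ≠ 0) :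
    ∃ E : B → MonoidAlgebra k B,
      (∀ b b' : B, sameSupp b b' → E b = E b') ∧
      (∀ b : B, E b * E b = E b) ∧
      (∀ b b' : B, ¬ sameSupp b b' → E b * E b' = 0) ∧
      (∀ T : Finset B, IsSuppTransversal T → ∑ t ∈ T, E t = 1) ∧
      (∀ b : B, ThetaDelta b (E b)) ∧
      (∀ (g : G) (b : B), Finsupp.mapDomain (fun a => g • a) (E b).coeff = (E (g • b)).coeff) := by
  classical
  open Stmt3Aux in
  refine ⟨fun b => Fidem k G hidem (⟦b⟧ : Supp hidem), ?_, ?_, ?_, ?_, ?_, ?_⟩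
  · intro b b' h
    show Fidem k G hidem (⟦b⟧ : Supp hidem) = Fidem k G hidem (⟦b'⟧ : Supp hidem)
    rw [(mk_eq_mk hidem).mpr h]
  · intro b
    rw [Fmul k G hidem hlrb hchar, if_pos rfl]
  · intro b b' h
    rw [Fmul k G hidem hlrb hchar, if_neg (fun he => h ((mk_eq_mk hidem).mp he))]
  · intro T hT
    have hbij : ∑ t ∈ T, Fidem k G hidem (⟦t⟧ : Supp hidem) =
        ∑ X : Supp hidem, Fidem k G hidem X := by
      refine Finset.sum_bij (fun t _ => (⟦t⟧ : Supp hidem)) (fun _ _ => Finset.mem_univ _)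
        ?_ ?_ (fun _ _ => rfl)
      · intro t1 h1 t2 h2 he
        exact hT.2 t1 h1 t2 h2 ((mk_eq_mk hidem).mp he)
      · intro X _
        obtain ⟨b, rfl⟩ := Quotient.exists_rep X
        obtain ⟨t, ht, hs⟩ := hT.1 b
        exact ⟨t, ht, (mk_eq_mk hidem).mpr hs⟩
    rw [hbij, sum_all_Fidem k G hidem hchar]
  · intro b c
    have h1 := chi_sum_coeff k hidem hlrb c (Fidem k G hidem (⟦b⟧ : Supp hidem))
    have h2 := chi_Fidem k G hidem hlrb hchar (⟦b⟧ : Supp hidem) c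
    have h3 : ((⟦c⟧ : Supp hidem) = ⟦b⟧) ↔ (c * b = c ∧ b * c = b) := mk_eq_mk hidem
    show (∑ x ∈ Finset.univ.filter fun x => c * x = c,
        (Fidem k G hidem (⟦b⟧ : Supp hidem)).coeff x) = _
    rw [h1, h2]
    exact if_congr h3 rfl rfl
  · intro g b
    have := Phi_Fidem k G hidem g (⟦b⟧ : Supp hidem)
    rw [Phi_apply] at this
    exact congrArg MonoidAlgebra.coeff this
end

section
/- Let B be a finite left regular band monoid, G a finite group acting on B by monoid automorphisms, k a field with (|G| : k) ≠ 0, and let E : B → kB be a family satisfying: E constant on σ-classes; each E(b) idempotent; E(b)*E(b′) = 0 when σ(b) ≠ σ(b′); Σ_{t∈T} E(t) = 1 for every support transversal T; θ(E(b)) = δ_{σ(b)}; and g•E(b) = E(g•b). Fix x₀ ∈ B and let T ⊆ B contain exactly one element of each σ-class whose support lies in the G-orbit of σ(x₀) (i.e. every t ∈ T satisfies ∃ g, σ(t) = σ(g•x₀); distinct elements of T have distinct supports; and every b with ∃ g, σ(b) = σ(g•x₀) satisfies σ(b) = σ(t) for some t ∈ T). Set Ē := Σ_{t∈T} E(t).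 Then: (a) g•Ē = Ē for every g ∈ G; (b) Ē*Ē = Ē; (c) if y₀ ∈ B satisfies ¬∃ g, σ(y₀) = σ(g•x₀), and Ē′ is the analogous sum for y₀, then Ē*Ē′ = 0; (d) Ē is a primitive idempotent of the invariant subalgebra (kB)^G: for every f ∈ (kB)^G with f*f = f and Ē*f*Ē = f, either f = 0 or f = Ē. -/
open Finset

section SS
variable {B : Type*} [Monoid B]

lemma ss_symm {a b : B} (h : sameSupp a b) : sameSupp b a := ⟨h.2, h.1⟩

lemma ss_trans {a b c : B} (h1 : sameSupp a b) (h2 : sameSupp b c) : sameSupp a c := by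
  obtain ⟨hab, hba⟩ := h1; obtain ⟨hbc, hcb⟩ := h2
  constructor
  · calc a * c = a * b * c := by rw [hab]
      _ = a * (b * c) := mul_assoc _ _ _
      _ = a * b := by rw [hbc]
      _ = a := hab
  · calc c * a = c * b * a := by rw [hcb]
      _ = c * (b * a) := mul_assoc _ _ _
      _ = c * b := by rw [hba]
      _ = c := hcb

variable {G : Type*} [Group G] [MulDistribMulAction G B]

lemma ss_smul (g : G) {a b : B} (h : sameSupp a b) : sameSupp (g • a) (g • b) := by
  constructor
  · rw [← smul_mul', h.1]
  · rw [← smul_mul', h.2]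

end SS

section Aux
variable {k B : Type*} [Field k] [Monoid B] [Fintype B] [DecidableEq B]

/-- coefficient-sum θ_c -/
def thsum (c : B) (f : MonoidAlgebra k B) : k :=
  ∑ b ∈ Finset.univ.filter fun b => c * b = c, f.coeff b

lemma memmul (hidem : ∀ x : B, x * x = x) (hlrb : ∀ x y : B, x * y * x = x * y)
    (c x y : B) : c * (x * y) = c ↔ c * x = c ∧ c * y = c := by
  constructor
  · intro h
    have hx : c * x = c := by
      calc c * x = c * (x * y) * x := by rw [h]
        _ = c * (x * y * x) := by rw [mul_assoc]
        _ = c * (x * y) := by rw [hlrb]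
        _ = c := h
    exact ⟨hx, by rw [← mul_assoc, hx] at h; exact h⟩
  · rintro ⟨h1, h2⟩; rw [← mul_assoc, h1, h2]

lemma thsum_eq_lift (hidem : ∀ x : B, x * x = x) (hlrb : ∀ x y : B, x * y * x = x * y)
    (c : B) :
    ∃ F : B →* k, (∀ b, F b = if c * b = c then 1 else 0) ∧
      ∀ f : MonoidAlgebra k B, thsum c f = (MonoidAlgebra.lift k k B F) f := by
  refine ⟨⟨⟨fun b => if c * b = c then 1 else 0, by simp⟩, fun x y => ?_⟩, fun b => rfl, ?_⟩
  · simp only [MonoidHom.coe_mk, OneHom.coe_mk]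
    have := memmul hidem hlrb c x y
    by_cases h1 : c * x = c <;> by_cases h2 : c * y = c <;>
      simp [h1, h2, this] <;> tauto
  · intro f
    rw [MonoidAlgebra.lift_apply, Finsupp.sum_fintype]
    · rw [thsum, Finset.sum_filter]
      apply Finset.sum_congr rfl
      intro b _
      simp only [MonoidHom.coe_mk, OneHom.coe_mk, smul_eq_mul]
      by_cases h : c * b = c <;> simp [h]
    · intro b; simp

lemma thsum_mul (hidem : ∀ x : B, x * x = x) (hlrb : ∀ x y : B, x * y * x = x * y)
    (c : B) (f g : MonoidAlgebra k B) :
    thsum c (f * g) = thsum c f * thsum c g := by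
  obtain ⟨F, -, hF⟩ := thsum_eq_lift (k := k) hidem hlrb c
  rw [hF, hF, hF, map_mul]

lemma thsum_sub (c : B) (f g : MonoidAlgebra k B) :
    thsum c (f - g) = thsum c f - thsum c g := by
  rw [thsum, thsum, thsum, ← Finset.sum_sub_distrib]
  exact Finset.sum_congr rfl fun b _ => Finsupp.sub_apply f.coeff g.coeff b

lemma thsum_sum {ι : Type*} (c : B) (s : Finset ι) (f : ι → MonoidAlgebra k B) :
    thsum c (∑ i ∈ s, f i) = ∑ i ∈ s, thsum c (f i) := by
  rw [thsum]
  have h : ∀ b : B, (∑ i ∈ s, f i).coeff b = ∑ i ∈ s, (f i).coeff b := fun b => by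
    rw [MonoidAlgebra.coeff_sum]; exact Finset.sum_apply' b
  simp only [h, thsum]
  exact Finset.sum_comm

lemma thsum_congr (c c' : B) (h : sameSupp c c') (f : MonoidAlgebra k B) :
    thsum c f = thsum c' f := by
  rw [thsum, thsum]
  apply Finset.sum_congr _ (fun _ _ => rfl)
  apply Finset.filter_congr
  intro b _
  constructor
  · intro hb
    calc c' * b = c' * c * b := by rw [h.2]
      _ = c' * (c * b) := mul_assoc _ _ _
      _ = c' * c := by rw [hb]
      _ = c' := h.2
  · intro hb
    calc c * b = c * c' * b := by rw [h.1]
      _ = c * (c' * b) := mul_assoc _ _ _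
      _ = c * c' := by rw [hb]
      _ = c := h.1

variable {G : Type*} [Group G] [MulDistribMulAction G B]

lemma thsum_smul (g : G) (c : B) (f : MonoidAlgebra k B)
    (hf : MonoidAlgebra.mapDomain (fun a => g • a) f = f) :
    thsum (g • c) f = thsum c f := by
  rw [thsum, thsum]
  apply Finset.sum_nbij' (i := fun b => g⁻¹ • b) (j := fun b => g • b)
  · intro b hb
    rw [Finset.mem_filter] at hb ⊢
    refine ⟨Finset.mem_univ _, ?_⟩
    have : g • (c * g⁻¹ • b) = g • c := by
      rw [smul_mul', smul_inv_smul]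
      exact hb.2
    exact smul_left_cancel g this
  · intro b hb
    rw [Finset.mem_filter] at hb ⊢
    refine ⟨Finset.mem_univ _, ?_⟩
    rw [← smul_mul', hb.2]
  · intro b _; exact smul_inv_smul g b
  · intro b _; exact inv_smul_smul g b
  · intro b _
    have h2 := Finsupp.mapDomain_apply (f := fun a : B => g • a)
      (MulAction.injective g) f.coeff (g⁻¹ • b)
    simp only [smul_inv_smul] at h2
    change (MonoidAlgebra.mapDomain (fun a : B => g • a) f).coeff b = _ at h2
    rw [hf] at h2
    exact h2

end Aux

section Nil
variable {k B : Type*} [Field k] [Monoid B] [Fintype B] [DecidableEq B]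

lemma single_mul_expand (c : B) (f : MonoidAlgebra k B) :
    MonoidAlgebra.single c 1 * f = ∑ b, MonoidAlgebra.single (c * b) (f.coeff b) := by
  have hf : f = ∑ b, MonoidAlgebra.single b (f.coeff b) := by
    ext b'
    rw [MonoidAlgebra.coeff_sum, Finset.sum_apply']
    simp [Finsupp.single_apply]
  conv_lhs => rw [hf]
  rw [Finset.mul_sum]
  exact Finset.sum_congr rfl fun b _ => by
    rw [MonoidAlgebra.single_mul_single, one_mul]

def mheight (c : B) : ℕ := (univ.filter fun d : B => d * c = d ∧ ¬ c * d = c).card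

lemma mheight_lt (hidem : ∀ x : B, x * x = x) (hlrb : ∀ x y : B, x * y * x = x * y)
    (c b : B) (h : ¬ c * b = c) : mheight (c * b) < mheight c := by
  apply Finset.card_lt_card
  constructor
  · intro e he
    rw [Finset.mem_filter] at he ⊢
    obtain ⟨-, he1, he2⟩ := he
    refine ⟨Finset.mem_univ e, ?_, ?_⟩
    · calc e * c = e * (c * b) * c := by rw [he1]
        _ = e * (c * b * c) := by rw [mul_assoc]
        _ = e * (c * b) := by rw [hlrb]
        _ = e := he1
    · intro hce
      apply h
      calc c * b = c * c * b := by rw [hidem]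
        _ = c * (c * b) := by rw [mul_assoc]
        _ = c * e * (c * b) := by rw [hce]
        _ = c * (e * (c * b)) := by rw [mul_assoc]
        _ = c * e := by rw [he1]
        _ = c := hce
  · intro hsub
    have hmem : c * b ∈ univ.filter fun d : B => d * c = d ∧ ¬ c * d = c := by
      rw [Finset.mem_filter]
      refine ⟨Finset.mem_univ _, hlrb c b, ?_⟩
      intro hc
      apply h
      rw [← mul_assoc, hidem] at hc
      exact hc
    have := hsub hmem
    rw [Finset.mem_filter] at this
    exact this.2.2 (hidem (c * b))

lemma nilkey (hidem : ∀ x : B, x * x = x) (hlrb : ∀ x y : B, x * y * x = x * y)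
    (a : MonoidAlgebra k B) (h0 : ∀ c : B, (∑ b ∈ Finset.univ.filter fun b => c * b = c, a.coeff b) = 0) :
    ∀ (n : ℕ) (c : B), mheight c = n → MonoidAlgebra.single c (1 : k) * a ^ (n + 1) = 0 := by
  intro n
  induction n using Nat.strong_induction_on with
  | _ n ih =>
    intro c hc
    rw [pow_succ', ← mul_assoc, single_mul_expand,
      ← Finset.sum_filter_add_sum_filter_not univ (fun b => c * b = c), add_mul]
    have h1 : (∑ b ∈ univ.filter fun b => c * b = c, MonoidAlgebra.single (c * b) (a.coeff b)) = 0 := by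
      have heq : ∀ b ∈ univ.filter fun b => c * b = c,
          MonoidAlgebra.single (c * b) (a.coeff b) = MonoidAlgebra.single c (a.coeff b) := by
        intro b hb
        rw [(Finset.mem_filter.1 hb).2]
      rw [Finset.sum_congr rfl heq]
      have hrw : ∀ b : B, MonoidAlgebra.single c (a.coeff b) = MonoidAlgebra.singleAddHom c (a.coeff b) :=
        fun _ => rfl
      simp only [hrw]
      rw [← map_sum (MonoidAlgebra.singleAddHom c) (fun b => a.coeff b) _, h0 c]
      simp
    rw [h1, zero_mul, zero_add, Finset.sum_mul]
    apply Finset.sum_eq_zero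
    intro b hb
    have hb' : ¬ c * b = c := by
      have := (Finset.mem_filter.1 hb).2
      simpa using this
    have hlt : mheight (c * b) < n := hc ▸ mheight_lt hidem hlrb c b hb'
    have key := ih (mheight (c * b)) hlt (c * b) rfl
    obtain ⟨r, hr⟩ : ∃ r, n = (mheight (c * b) + 1) + r := ⟨n - (mheight (c * b) + 1), by omega⟩
    have hsm : MonoidAlgebra.single (c * b) (a.coeff b) = a.coeff b • MonoidAlgebra.single (c * b) (1 : k) := by
      rw [MonoidAlgebra.smul_single', mul_one]
    rw [hr, pow_add, ← mul_assoc, hsm, smul_mul_assoc, key, smul_zero, zero_mul]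

lemma idem_th_zero (hidem : ∀ x : B, x * x = x) (hlrb : ∀ x y : B, x * y * x = x * y)
    (a : MonoidAlgebra k B) (ha : a * a = a)
    (h0 : ∀ c : B, (∑ b ∈ Finset.univ.filter fun b => c * b = c, a.coeff b) = 0) : a = 0 := by
  have h1 : ∀ n : ℕ, a ^ (n + 1) = a := by
    intro n
    induction n with
    | zero => rw [pow_one]
    | succ n ihn => rw [pow_succ, ihn, ha]
  have h2 := nilkey hidem hlrb a h0 (mheight (1 : B)) 1 rfl
  rw [← MonoidAlgebra.one_def, one_mul, h1] at h2
  exact h2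

end Nil

theorem stmt4 (k B G : Type*) [Field k] [Monoid B] [Fintype B] [DecidableEq B]
    [Group G] [Fintype G] [MulDistribMulAction G B]
    (hidem : ∀ x : B, x * x = x) (hlrb : ∀ x y : B, x * y * x = x * y)
    (hchar : (Fintype.card G : k) ≠ 0)
    (E : B → MonoidAlgebra k B)
    (hconst : ∀ b b' : B, sameSupp b b' → E b = E b')
    (hidemE : ∀ b : B, E b * E b = E b)
    (horth : ∀ b b' : B, ¬ sameSupp b b' → E b * E b' = 0)
    (hcomplete : ∀ T : Finset B, IsSuppTransversal T → ∑ t ∈ T, E t = 1)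
    (htheta : ∀ b : B, ThetaDelta b (E b))
    (hequiv : ∀ (g : G) (b : B), MonoidAlgebra.mapDomain (fun a => g • a) (E b) = E (g • b))
    (x₀ : B) (T : Finset B)
    -- `T` contains exactly one element of each `σ`-class of support in the orbit `[σ(x₀)]`:
    (hT1 : ∀ t ∈ T, ∃ g : G, sameSupp t (g • x₀))
    (hT2 : ∀ t ∈ T, ∀ t' ∈ T, sameSupp t t' → t = t')
    (hT3 : ∀ b : B, (∃ g : G, sameSupp b (g • x₀)) → ∃ t ∈ T, sameSupp b t) :
    -- (a) the orbit-sum `Ē` is fixed by `G`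
    (∀ g : G, MonoidAlgebra.mapDomain (fun a => g • a) (∑ t ∈ T, E t) = ∑ t ∈ T, E t) ∧
    -- (b) `Ē` is idempotent
    ((∑ t ∈ T, E t) * ∑ t ∈ T, E t = ∑ t ∈ T, E t) ∧
    -- (c) `Ē * Ē′ = 0` for an analogous sum attached to `y₀` with `[σ(y₀)] ≠ [σ(x₀)]`
    (∀ y₀ : B, (¬ ∃ g : G, sameSupp y₀ (g • x₀)) →
      ∀ T' : Finset B,
        (∀ t ∈ T', ∃ g : G, sameSupp t (g • y₀)) →
        (∀ t ∈ T', ∀ t' ∈ T', sameSupp t t' → t = t') →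
        (∀ b : B, (∃ g : G, sameSupp b (g • y₀)) → ∃ t ∈ T', sameSupp b t) →
        (∑ t ∈ T, E t) * ∑ t ∈ T', E t = 0) ∧
    -- (d) `Ē` is a primitive idempotent of `(kB)^G`
    (∀ f : MonoidAlgebra k B,
      (∀ g : G, MonoidAlgebra.mapDomain (fun a => g • a) f = f) →
      f * f = f →
      (∑ t ∈ T, E t) * f * ∑ t ∈ T, E t = f →
      f = 0 ∨ f = ∑ t ∈ T, E t) := by
  classical
  set Ee := ∑ t ∈ T, E t with hEe
  -- part (b)
  have hb : Ee * Ee = Ee := by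
    rw [hEe, Finset.sum_mul_sum]
    apply Finset.sum_congr rfl
    intro s hs
    rw [Finset.sum_eq_single_of_mem s hs
      (fun t ht hne => horth s t fun hss => hne (hT2 s hs t ht hss).symm)]
    exact hidemE s
  -- selection function
  have hpi : ∀ b : B, (∃ t ∈ T, sameSupp b t) →
      ∃ t ∈ T, sameSupp b t := fun b h => h
  let pi : B → B := fun b => if h : ∃ t ∈ T, sameSupp b t then h.choose else b
  have hpi : ∀ b : B, (∃ t ∈ T, sameSupp b t) → pi b ∈ T ∧ sameSupp b (pi b) := by
    intro b h
    have : pi b = h.choose := dif_pos h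
    rw [this]
    exact ⟨h.choose_spec.1, h.choose_spec.2⟩
  have horb : ∀ (g : G) (t : B), t ∈ T → ∃ t' ∈ T, sameSupp (g • t) t' := by
    intro g t ht
    obtain ⟨h, hh⟩ := hT1 t ht
    refine hT3 _ ⟨g * h, ?_⟩
    rw [mul_smul]
    exact ss_smul g hh
  -- a key reindexing
  have hkey : ∀ g : G, ∑ t ∈ T, E (g • t) = ∑ t ∈ T, E t := by
    intro g
    apply Finset.sum_nbij' (i := fun t => pi (g • t)) (j := fun t => pi (g⁻¹ • t))
    · intro t ht; exact (hpi _ (horb g t ht)).1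
    · intro t ht; exact (hpi _ (horb g⁻¹ t ht)).1
    · intro t ht
      obtain ⟨hmem, hss⟩ := hpi _ (horb g t ht)
      obtain ⟨hmem', hss'⟩ := hpi _ (horb g⁻¹ _ hmem)
      have h1 : sameSupp (g⁻¹ • (pi (g • t))) t := by
        have := ss_smul g⁻¹ hss
        rw [inv_smul_smul] at this
        exact ss_symm this
      exact hT2 _ hmem' _ ht (ss_trans (ss_symm hss') h1)
    · intro t ht
      obtain ⟨hmem, hss⟩ := hpi _ (horb g⁻¹ t ht)
      obtain ⟨hmem', hss'⟩ := hpi _ (horb g _ hmem)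
      have h1 : sameSupp (g • (pi (g⁻¹ • t))) t := by
        have := ss_smul g hss
        rw [smul_inv_smul] at this
        exact ss_symm this
      exact hT2 _ hmem' _ ht (ss_trans (ss_symm hss') h1)
    · intro t ht
      exact hconst _ _ (hpi _ (horb g t ht)).2
  -- part (a)
  have ha : ∀ g : G, MonoidAlgebra.mapDomain (fun a => g • a) Ee = Ee := by
    intro g
    rw [hEe, show ∀ s : Finset B, MonoidAlgebra.mapDomain (fun a => g • a) (∑ t ∈ s, E t) =
        ∑ t ∈ s, MonoidAlgebra.mapDomain (fun a => g • a) (E t) from fun s => by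
      ext; simp [Finsupp.mapDomain_finset_sum]]
    rw [Finset.sum_congr rfl (fun t _ => hequiv g t)]
    exact hkey g
  -- theta of E terms
  have hthE1 : ∀ c t : B, thsum c (E t) = if c * t = c ∧ t * c = t then 1 else 0 :=
    fun c t => htheta t c
  -- theta of Ee
  have hthE : ∀ c : B, thsum c Ee = if (∃ g : G, sameSupp c (g • x₀)) then 1 else 0 := by
    intro c
    rw [hEe, thsum_sum]
    by_cases hex : ∃ g : G, sameSupp c (g • x₀)
    · obtain ⟨t₀, ht₀, hss₀⟩ := hT3 c hex
      have hz : ∀ t ∈ T, t ≠ t₀ → thsum c (E t) = 0 := by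
        intro t ht hne
        rw [hthE1, if_neg]
        intro hct
        exact hne (hT2 t ht t₀ ht₀ (ss_trans (ss_symm ⟨hct.1, hct.2⟩) hss₀))
      rw [if_pos hex, Finset.sum_eq_single_of_mem t₀ ht₀ hz, hthE1,
        if_pos ⟨hss₀.1, hss₀.2⟩]
    · rw [if_neg hex]
      apply Finset.sum_eq_zero
      intro t ht
      rw [hthE1, if_neg]
      intro hct
      obtain ⟨g, hg⟩ := hT1 t ht
      exact hex ⟨g, ss_trans ⟨hct.1, hct.2⟩ hg⟩
  refine ⟨ha, hb, ?_, ?_⟩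
  -- part (c)
  · intro y₀ hy T' hT1' _ _
    rw [hEe, Finset.sum_mul_sum]
    apply Finset.sum_eq_zero
    intro s hs
    apply Finset.sum_eq_zero
    intro t ht
    apply horth
    intro hss
    obtain ⟨g, hg⟩ := hT1 s hs
    obtain ⟨h, hh⟩ := hT1' t ht
    have h1 : sameSupp (g • x₀) (h • y₀) := ss_trans (ss_symm hg) (ss_trans hss hh)
    have h2 := ss_smul h⁻¹ h1
    rw [inv_smul_smul, ← mul_smul] at h2
    exact hy ⟨h⁻¹ * g, ss_symm h2⟩
  -- part (d)
  · intro f hfG hff hEfE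
    have hEf : Ee * f = f := by
      conv_lhs => rw [← hEfE, ← mul_assoc, ← mul_assoc, hb]
      exact hEfE
    have hfE : f * Ee = f := by
      conv_lhs => rw [← hEfE, mul_assoc, hb]
      exact hEfE
    have hth_orbit : ∀ c : B, (∃ g : G, sameSupp c (g • x₀)) → thsum c f = thsum x₀ f := by
      rintro c ⟨g, hg⟩
      rw [thsum_congr c (g • x₀) hg f, thsum_smul g x₀ f (hfG g)]
    have hth_out : ∀ c : B, (¬ ∃ g : G, sameSupp c (g • x₀)) → thsum c f = 0 := by
      intro c hc
      have h1 : thsum c f = thsum c Ee * thsum c f := by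
        rw [← thsum_mul hidem hlrb, hEf]
      rw [h1, hthE c, if_neg hc, zero_mul]
    have hdich : thsum x₀ f = 0 ∨ thsum x₀ f = 1 := by
      have h1 : thsum x₀ f * thsum x₀ f = thsum x₀ f := by
        rw [← thsum_mul hidem hlrb, hff]
      rcases eq_or_ne (thsum x₀ f) 0 with h | h
      · exact Or.inl h
      · right
        have := mul_left_cancel₀ h (h1.trans (mul_one (thsum x₀ f)).symm)
        exact this
    rcases hdich with h0 | h1
    · left
      apply idem_th_zero hidem hlrb f hff
      intro c
      show thsum c f = 0
      by_cases hc : ∃ g : G, sameSupp c (g • x₀)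
      · rw [hth_orbit c hc, h0]
      · exact hth_out c hc
    · right
      have hsub : (Ee - f) * (Ee - f) = Ee - f := by
        rw [sub_mul, mul_sub, mul_sub, hb, hEf, hfE, hff, sub_self, sub_zero]
      have hz : Ee - f = 0 := by
        apply idem_th_zero hidem hlrb _ hsub
        intro c
        show thsum c (Ee - f) = 0
        rw [thsum_sub, hthE c]
        by_cases hc : ∃ g : G, sameSupp c (g • x₀)
        · rw [if_pos hc, hth_orbit c hc, h1, sub_self]
        · rw [if_neg hc, hth_out c hc, sub_self]
      have := sub_eq_zero.mp hz
      exact this.symm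
end

section
/- Let k be a field, B a finite left regular band (semigroup), x₀ ∈ B, and e ∈ kB an idempotent (e*e = e) satisfying θ(e) = δ_{σ(x₀)}. Then for every b ∈ B with x₀*b ≠ x₀ (i.e. σ(b) ≱ σ(x₀)), one has b*e = 0 in kB. -/
theorem stmt6 (k B : Type*) [Field k] [Semigroup B] [Fintype B] [DecidableEq B]
    (hidem : ∀ x : B, x * x = x) (hlrb : ∀ x y : B, x * y * x = x * y)
    (x₀ : B) (e : MonoidAlgebra k B) (he : e * e = e) (htheta : ThetaDelta x₀ e)
    (b : B) (hb : x₀ * b ≠ x₀) :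
    MonoidAlgebra.single b (1 : k) * e = 0 := by
  -- formula for coefficients of `single c 1 * e`
  have haux : ∀ c d : B, (MonoidAlgebra.single c (1:k) * e).coeff d =
      ∑ a ∈ Finset.univ.filter (fun a => c * a = d), e.coeff a := by
    intro c d
    rw [MonoidAlgebra.coeff_mul, MonoidAlgebra.coeff_single, Finsupp.sum_single_index]
    · rw [Finsupp.sum_fintype]
      · rw [Finset.sum_filter]
        simp
      · intro a; simp
    · simp
  suffices H : ∀ n : ℕ, ∀ c : B, (Finset.univ.filter fun z => ¬ c * z = c).card ≤ n →
      x₀ * c ≠ x₀ → MonoidAlgebra.single c (1:k) * e = 0 by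
    exact H _ b le_rfl hb
  intro n
  induction n using Nat.strong_induction_on with
  | _ n IH =>
    intro c hcard hc
    set f := MonoidAlgebra.single c (1:k) * e with hf
    -- coefficient at c vanishes
    have hfc : f.coeff c = 0 := by
      rw [hf, haux, htheta c, if_neg]
      rintro ⟨-, h2⟩
      exact hc h2
    -- support facts
    have hsupp : ∀ d ∈ f.coeff.support, c * d = d ∧ d * c = d := by
      intro d hd
      rw [Finsupp.mem_support_iff, hf, haux] at hd
      obtain ⟨a, ha, -⟩ := Finset.exists_ne_zero_of_sum_ne_zero hd
      rw [Finset.mem_filter] at ha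
      obtain ⟨-, rfl⟩ := ha
      constructor
      · rw [← mul_assoc, hidem]
      · rw [hlrb]
    -- each nontrivial support element kills e, by induction
    have hkill : ∀ d ∈ f.coeff.support, d ≠ c → MonoidAlgebra.single d (1:k) * e = 0 := by
      intro d hd hdc
      obtain ⟨hcd, hdcd⟩ := hsupp d hd
      have hx : x₀ * d ≠ x₀ := by
        intro h
        apply hc
        calc x₀ * c = x₀ * d * c := by rw [h]
        _ = x₀ * (d * c) := by rw [mul_assoc]
        _ = x₀ * d := by rw [hdcd]
        _ = x₀ := h
      have hsub : (Finset.univ.filter fun z => ¬ d * z = d) ⊂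
          (Finset.univ.filter fun z => ¬ c * z = c) := by
        constructor
        · intro z hz
          rw [Finset.mem_filter] at hz ⊢
          refine ⟨Finset.mem_univ _, fun hcz => hz.2 ?_⟩
          calc d * z = d * c * z := by rw [hdcd]
          _ = d * (c * z) := by rw [mul_assoc]
          _ = d * c := by rw [hcz]
          _ = d := hdcd
        · intro hsub'
          have hdmem : d ∈ (Finset.univ.filter fun z => ¬ c * z = c) := by
            rw [Finset.mem_filter]
            exact ⟨Finset.mem_univ _, fun h => hdc (h ▸ hcd.symm ▸ rfl)⟩
          have := hsub' hdmem
          rw [Finset.mem_filter] at this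
          exact this.2 (hidem d)
      have hlt : (Finset.univ.filter fun z => ¬ d * z = d).card < n :=
        lt_of_lt_of_le (Finset.card_lt_card hsub) hcard
      exact IH _ hlt d le_rfl hx
    -- now f = f * e = 0
    have hfe : f = f * e := by rw [hf, mul_assoc, he]
    rw [hfe, ← MonoidAlgebra.sum_coeff_single f, Finsupp.sum, Finset.sum_mul]
    apply Finset.sum_eq_zero
    intro d hd
    by_cases hdc : d = c
    · subst hdc
      rw [hfc]
      simp [MonoidAlgebra.single_zero]
    · have h0 := hkill d hd hdc
      have : (MonoidAlgebra.single d (f.coeff d) : MonoidAlgebra k B) = (f.coeff d) • MonoidAlgebra.single d (1:k) := by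
        rw [MonoidAlgebra.smul_single, smul_eq_mul, mul_one]
      rw [this, smul_mul_assoc, h0, smul_zero]
end

section
/- Let k be a field, B a finite left regular band (semigroup), x₀ ∈ B, and e ∈ kB an idempotent (e*e = e) satisfying θ(e) = δ_{σ(x₀)}. Then e lies in the k-linear span of {b ∈ B : b*x₀ = b}, i.e. of the basis elements whose support is ≤ σ(x₀). -/
/-- In a band, above any element of a finite set there is a maximal element of the set
for the preorder `b ≼ c ↔ b * c = b`. -/
lemma exists_maximal_above {B : Type*} [Semigroup B] [DecidableEq B]
    (hidem : ∀ x : B, x * x = x)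
    (S : Finset B) (b : B) (hb : b ∈ S) :
    ∃ c ∈ S, b * c = b ∧ ∀ d ∈ S, c * d = c → d * c = d := by
  classical
  have main : ∀ n (b : B), b ∈ S → (S.filter fun d => b * d = b).card ≤ n →
      ∃ c ∈ S, b * c = b ∧ ∀ d ∈ S, c * d = c → d * c = d := by
    intro n
    induction n with
    | zero =>
      intro b hb hcard
      exfalso
      have : b ∈ S.filter fun d => b * d = b := Finset.mem_filter.2 ⟨hb, hidem b⟩
      have := Finset.card_pos.2 ⟨b, this⟩
      omega
    | succ n ih =>
      intro b hb hcard
      by_cases h : ∀ d ∈ S, b * d = b → d * b = d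
      · exact ⟨b, hb, hidem b, h⟩
      · push_neg at h
        obtain ⟨d, hd, hbd, hdb⟩ := h
        have hsub : (S.filter fun x => d * x = d) ⊆ (S.filter fun x => b * x = b) := by
          intro x hx
          rw [Finset.mem_filter] at hx ⊢
          refine ⟨hx.1, ?_⟩
          calc b * x = b * d * x := by rw [hbd]
            _ = b * (d * x) := mul_assoc _ _ _
            _ = b * d := by rw [hx.2]
            _ = b := hbd
        have hb_not : b ∉ (S.filter fun x => d * x = d) := by
          rw [Finset.mem_filter]
          rintro ⟨-, h2⟩
          exact hdb h2
        have hb_in : b ∈ (S.filter fun x => b * x = b) :=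
          Finset.mem_filter.2 ⟨hb, hidem b⟩
        have hlt : (S.filter fun x => d * x = d).card <
            (S.filter fun x => b * x = b).card :=
          Finset.card_lt_card (Finset.ssubset_iff_of_subset hsub |>.2 ⟨b, hb_in, hb_not⟩)
        obtain ⟨c, hc, hdc, hmax⟩ := ih d hd (by omega)
        refine ⟨c, hc, ?_, hmax⟩
        calc b * c = b * d * c := by rw [hbd]
          _ = b * (d * c) := mul_assoc _ _ _
          _ = b * d := by rw [hdc]
          _ = b := hbd
  exact main (S.filter fun d => b * d = b).card b hb le_rfl

theorem stmt7 (k B : Type*) [Field k] [Semigroup B] [Fintype B] [DecidableEq B]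
    (hidem : ∀ x : B, x * x = x) (hlrb : ∀ x y : B, x * y * x = x * y)
    (x₀ : B) (e : MonoidAlgebra k B) (he : e * e = e) (htheta : ThetaDelta x₀ e) :
    e ∈ Submodule.span k
      {f : MonoidAlgebra k B | ∃ b : B, b * x₀ = b ∧ f = MonoidAlgebra.single b 1} := by
  classical
  -- Key claim: every element of the support of `e` satisfies `b * x₀ = b`.
  have key : ∀ b ∈ e.coeff.support, b * x₀ = b := by
    intro b hb
    obtain ⟨c, hc, hbc, hmax⟩ := exists_maximal_above hidem e.coeff.support b hb
    -- any product u * v = c with u, v ∈ supp forces u = c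
    have huv : ∀ u ∈ e.coeff.support, ∀ v ∈ e.coeff.support, u * v = c → u = c := by
      intro u hu v hv huvc
      have hcu : c * u = c := by
        calc c * u = u * v * u := by rw [huvc]
          _ = u * v := hlrb u v
          _ = c := huvc
      have huc : u * c = u := hmax u hu hcu
      calc u = u * c := huc.symm
        _ = u * (u * v) := by rw [huvc]
        _ = u * u * v := (mul_assoc _ _ _).symm
        _ = u * v := by rw [hidem u]
        _ = c := huvc
    have hec : e.coeff c ≠ 0 := Finsupp.mem_support_iff.1 hc
    -- compute the coefficient of c in e * e
    have hmul : e.coeff c = e.coeff c * ∑ v ∈ Finset.univ.filter fun v => c * v = c, e.coeff v := by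
      conv_lhs => rw [← he]
      rw [MonoidAlgebra.coeff_mul, Finsupp.sum]
      have hstep : ∀ u ∈ e.coeff.support,
          (e.coeff.sum fun a₂ b₂ => if u * a₂ = c then e.coeff u * b₂ else 0) =
          if u = c then ∑ v ∈ e.coeff.support.filter (fun v => c * v = c), e.coeff c * e.coeff v else 0 := by
        intro u hu
        rw [Finsupp.sum]
        by_cases huc : u = c
        · subst huc
          rw [if_pos rfl, Finset.sum_filter]
        · rw [if_neg huc]
          apply Finset.sum_eq_zero
          intro v hv
          rw [if_neg]
          intro h
          exact huc (huv u hu v hv h)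
      rw [Finset.sum_congr rfl hstep, Finset.sum_ite_eq' e.coeff.support c
        (fun _ => ∑ v ∈ e.coeff.support.filter (fun v => c * v = c), e.coeff c * e.coeff v), if_pos hc,
        ← Finset.mul_sum]
      congr 1
      apply Finset.sum_subset
      · intro x hx
        rw [Finset.mem_filter] at hx ⊢
        exact ⟨Finset.mem_univ x, hx.2⟩
      · intro x hx hx'
        by_contra hne
        exact hx' (Finset.mem_filter.2 ⟨Finsupp.mem_support_iff.2 hne,
          (Finset.mem_filter.1 hx).2⟩)
    rw [htheta c] at hmul
    by_cases hcond : c * x₀ = c ∧ x₀ * c = x₀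
    · -- then b * x₀ = b since b * c = b
      calc b * x₀ = b * c * x₀ := by rw [hbc]
        _ = b * (c * x₀) := mul_assoc _ _ _
        _ = b * c := by rw [hcond.1]
        _ = b := hbc
    · rw [if_neg hcond, mul_zero] at hmul
      exact absurd hmul hec
  -- conclude: e is a sum of its single components, each in the spanning set
  have : e = ∑ b ∈ e.coeff.support, MonoidAlgebra.single b (e.coeff b) := by
    conv_lhs => rw [← MonoidAlgebra.sum_coeff_single e]
    rfl
  rw [this]
  apply Submodule.sum_mem
  intro b hb
  have : (MonoidAlgebra.single b (e.coeff b) : MonoidAlgebra k B)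
      = e.coeff b • MonoidAlgebra.single b 1 := by
    rw [MonoidAlgebra.smul_single', mul_one]
  rw [this]
  exact Submodule.smul_mem _ _ (Submodule.subset_span ⟨b, key b hb, rfl⟩)
end

section
/- Let k be a field, B a finite left regular band (semigroup), and x₀, y₀ ∈ B with x₀*y₀ ≠ x₀ (i.e. σ(y₀) ≱ σ(x₀)). Let e ∈ kB be an idempotent satisfying θ(e) = δ_{σ(x₀)} and f ∈ kB an idempotent satisfying θ(f) = δ_{σ(y₀)}. Then f*w*e = 0 for every w ∈ kB. -/
open Finset MonoidAlgebra

namespace Stmt8Aux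

variable {k B : Type*} [Field k] [Semigroup B] [Fintype B] [DecidableEq B]

/-- size of the principal left ideal `Bb` (containing `b`, as `b*b = b`). -/
def hgt (b : B) : ℕ := (Finset.univ.image fun z => z * b).card

lemma hgt_pos (hidem : ∀ x : B, x * x = x) (b : B) : 1 ≤ hgt b :=
  Finset.card_pos.2 ⟨b, Finset.mem_image.2 ⟨b, mem_univ b, hidem b⟩⟩

lemma hgt_lt (hidem : ∀ x : B, x * x = x) {b d : B}
    (h1 : d * b = d) (h2 : b * d ≠ b) : hgt d < hgt b := by
  apply Finset.card_lt_card
  constructor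
  · intro x hx
    obtain ⟨z, -, rfl⟩ := Finset.mem_image.1 hx
    exact Finset.mem_image.2 ⟨z * d, mem_univ _, by rw [mul_assoc, h1]⟩
  · intro hsub
    have hb : b ∈ Finset.univ.image fun z => z * d :=
      hsub (Finset.mem_image.2 ⟨b, mem_univ b, hidem b⟩)
    obtain ⟨z, -, hz⟩ := Finset.mem_image.1 hb
    apply h2
    rw [← hz, mul_assoc, hidem d]

omit [Semigroup B] [DecidableEq B] in
lemma decomp (u : MonoidAlgebra k B) : u = ∑ a : B, single a (u.coeff a) := by
  have h : ∑ a ∈ u.coeff.support, single a (u.coeff a) = ∑ a : B, single a (u.coeff a) :=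
    Finset.sum_subset (Finset.subset_univ _) fun a _ ha => by
      rw [Finsupp.notMem_support_iff.1 ha, single_zero]
  conv_lhs => rw [← sum_coeff_single u, Finsupp.sum]
  exact h

lemma mul_single (u : MonoidAlgebra k B) (b : B) (r : k) :
    u * single b r = ∑ a : B, single (a * b) (u.coeff a * r) := by
  conv_lhs => rw [decomp u, Finset.sum_mul]
  exact Finset.sum_congr rfl fun a _ => single_mul_single ..

lemma single_mul (u : MonoidAlgebra k B) (b : B) (r : k) :
    single b r * u = ∑ a : B, single (b * a) (r * u.coeff a) := by
  conv_lhs => rw [decomp u, Finset.mul_sum]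
  exact Finset.sum_congr rfl fun a _ => single_mul_single ..

lemma mul_apply' (u v : MonoidAlgebra k B) (g : B) :
    (u * v).coeff g = ∑ a : B, ∑ c : B, if a * c = g then u.coeff a * v.coeff c else 0 := by
  rw [MonoidAlgebra.coeff_mul, Finsupp.sum]
  have inner : ∀ a : B, (v.coeff.sum fun c r => if a * c = g then u.coeff a * r else 0)
      = ∑ c : B, if a * c = g then u.coeff a * v.coeff c else 0 := by
    intro a
    rw [Finsupp.sum]
    refine Finset.sum_subset (Finset.subset_univ _) fun c _ hc => ?_
    rw [Finsupp.notMem_support_iff.1 hc, mul_zero, ite_self]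
  rw [show (∑ a ∈ u.coeff.support, v.coeff.sum fun c r => if a * c = g then u.coeff a * r else 0)
      = ∑ a ∈ u.coeff.support, ∑ c : B, if a * c = g then u.coeff a * v.coeff c else 0 from
    Finset.sum_congr rfl fun a _ => inner a]
  refine Finset.sum_subset (Finset.subset_univ _) fun a _ ha => ?_
  refine Finset.sum_eq_zero fun c _ => ?_
  rw [Finsupp.notMem_support_iff.1 ha, zero_mul, ite_self]

omit [Semigroup B] in
lemma single_sum {α : Type*} (c : B) (s : Finset α) (g : α → k) :
    (single c (∑ a ∈ s, g a) : MonoidAlgebra k B) = ∑ a ∈ s, single c (g a) :=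
  map_sum (MonoidAlgebra.singleAddHom c) g s

/-- Key lemma: `f` vanishes on `{a : x₀ * a = x₀}`. -/
lemma coeff_vanish (hidem : ∀ x : B, x * x = x) (hlrb : ∀ x y : B, x * y * x = x * y)
    {x₀ y₀ : B} (hxy : x₀ * y₀ ≠ x₀)
    {f : MonoidAlgebra k B} (hf : f * f = f) (hftheta : ThetaDelta y₀ f) :
    ∀ a : B, x₀ * a = x₀ → f.coeff a = 0 := by
  set S : Finset B := univ.filter fun a => x₀ * a = x₀ with hS
  set F : MonoidAlgebra k B := ∑ a ∈ S, single a (f.coeff a) with hFdef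
  have hFapp : ∀ g : B, F.coeff g = if x₀ * g = x₀ then f.coeff g else 0 := by
    intro g
    rw [hFdef, coeff_sum, Finsupp.finset_sum_apply]
    rw [show (∑ a ∈ S, (single a (f.coeff a) : MonoidAlgebra k B).coeff g)
        = ∑ a ∈ S, if a = g then f.coeff a else 0 from
      Finset.sum_congr rfl fun a _ => Finsupp.single_apply]
    rw [Finset.sum_ite_eq' S g ⇑f.coeff]
    simp [hS]
  have htheta0 : ∀ c : B, x₀ * c = x₀ →
      (∑ a ∈ univ.filter fun a => c * a = c, f.coeff a) = 0 := by
    intro c hc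
    rw [hftheta c, if_neg]
    rintro ⟨h1, h2⟩
    apply hxy
    calc x₀ * y₀ = (x₀ * c) * y₀ := by rw [hc]
      _ = x₀ * (c * y₀) := mul_assoc _ _ _
      _ = x₀ * c := by rw [h1]
      _ = x₀ := hc
  have hFF : F * F = F := by
    ext g
    rw [mul_apply']
    by_cases hg : x₀ * g = x₀
    · rw [hFapp g, if_pos hg, ← hf, mul_apply']
      refine Finset.sum_congr rfl fun a _ => Finset.sum_congr rfl fun c _ => ?_
      by_cases h : a * c = g
      · have hga : g * a = g := by rw [← h]; exact hlrb a c
        have hgc : g * c = g := by rw [← h, mul_assoc, hidem]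
        have ha : x₀ * a = x₀ := by
          calc x₀ * a = (x₀ * g) * a := by rw [hg]
            _ = x₀ * (g * a) := mul_assoc _ _ _
            _ = x₀ * g := by rw [hga]
            _ = x₀ := hg
        have hc : x₀ * c = x₀ := by
          calc x₀ * c = (x₀ * g) * c := by rw [hg]
            _ = x₀ * (g * c) := mul_assoc _ _ _
            _ = x₀ * g := by rw [hgc]
            _ = x₀ := hg
        rw [if_pos h, if_pos h, hFapp a, hFapp c, if_pos ha, if_pos hc]
      · rw [if_neg h, if_neg h]
    · rw [hFapp g, if_neg hg]
      refine Finset.sum_eq_zero fun a _ => Finset.sum_eq_zero fun c _ => ?_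
      by_cases h : a * c = g
      · rw [if_pos h]
        by_cases ha : x₀ * a = x₀
        · by_cases hcc : x₀ * c = x₀
          · exact absurd (by
              calc x₀ * g = x₀ * (a * c) := by rw [h]
                _ = (x₀ * a) * c := (mul_assoc _ _ _).symm
                _ = x₀ * c := by rw [ha]
                _ = x₀ := hcc) hg
          · rw [hFapp c, if_neg hcc, mul_zero]
        · rw [hFapp a, if_neg ha, zero_mul]
      · rw [if_neg h]
  have claimC : ∀ n : ℕ, ∀ c : B, x₀ * c = x₀ → hgt c ≤ n →
      ∀ r : k, single c r * F = 0 := by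
    intro n
    induction n with
    | zero =>
      intro c _ hle _
      exact absurd (le_trans (hgt_pos hidem c) hle) (by norm_num)
    | succ n ih =>
      intro c hc hle r
      have expand : single c r * F
          = ∑ a ∈ univ.filter (fun a => ¬ c * a = c), single (c * a) (r * F.coeff a) := by
        rw [single_mul, ← Finset.sum_filter_add_sum_filter_not univ (fun a => c * a = c)]
        have h1 : (∑ a ∈ univ.filter fun a => c * a = c, single (c * a) (r * F.coeff a) :
            MonoidAlgebra k B) = 0 := by
          have heq : ∀ a ∈ univ.filter fun a => c * a = c,
              (single (c * a) (r * F.coeff a) : MonoidAlgebra k B) = single c (r * f.coeff a) := by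
            intro a ha
            have hca : c * a = c := (Finset.mem_filter.1 ha).2
            have hxa : x₀ * a = x₀ := by
              calc x₀ * a = (x₀ * c) * a := by rw [hc]
                _ = x₀ * (c * a) := mul_assoc _ _ _
                _ = x₀ * c := by rw [hca]
                _ = x₀ := hc
            rw [hca, hFapp a, if_pos hxa]
          rw [Finset.sum_congr rfl heq, ← single_sum, ← Finset.mul_sum,
            htheta0 c hc, mul_zero, single_zero]
        rw [h1, zero_add]
      have step1 : single c r * F = (single c r * F) * F := by
        conv_lhs => rw [← hFF, ← mul_assoc]
      rw [step1, expand, Finset.sum_mul]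
      refine Finset.sum_eq_zero fun a ha => ?_
      have hna : ¬ c * a = c := (Finset.mem_filter.1 ha).2
      by_cases hxa : x₀ * a = x₀
      · have hxca : x₀ * (c * a) = x₀ := by
          rw [← mul_assoc, hc, hxa]
        have hcac : (c * a) * c = c * a := hlrb c a
        have hcca : c * (c * a) = c * a := by rw [← mul_assoc, hidem]
        have hlt : hgt (c * a) < hgt c := by
          apply hgt_lt hidem hcac
          rw [hcca]
          exact hna
        exact ih (c * a) hxca (Nat.lt_succ_iff.1 (lt_of_lt_of_le hlt hle)) (r * F.coeff a)
      · rw [hFapp a, if_neg hxa, mul_zero, single_zero, zero_mul]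
  have hF0 : F = 0 := by
    have : F = F * F := hFF.symm
    rw [this, hFdef, Finset.sum_mul]
    refine Finset.sum_eq_zero fun a ha => ?_
    have hxa : x₀ * a = x₀ := by simpa [hS] using ha
    exact claimC (hgt a) a hxa le_rfl (f.coeff a)
  intro a ha
  have h := hFapp a
  rw [hF0] at h
  simpa [ha] using h.symm

end Stmt8Aux

theorem stmt8 (k B : Type*) [Field k] [Semigroup B] [Fintype B] [DecidableEq B]
    (hidem : ∀ x : B, x * x = x) (hlrb : ∀ x y : B, x * y * x = x * y)
    (x₀ y₀ : B) (hxy : x₀ * y₀ ≠ x₀)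
    (e : MonoidAlgebra k B) (he : e * e = e) (hethaeta : ThetaDelta x₀ e)
    (f : MonoidAlgebra k B) (hf : f * f = f) (hftheta : ThetaDelta y₀ f) :
    ∀ w : MonoidAlgebra k B, f * w * e = 0 := by
  classical
  open Stmt8Aux in
  have vanish : ∀ a : B, x₀ * a = x₀ → f.coeff a = 0 := coeff_vanish hidem hlrb hxy hf hftheta
  have claimM : ∀ n : ℕ, ∀ b : B, hgt b ≤ n → ∀ r : k,
      f * MonoidAlgebra.single b r * e = 0 := by
    intro n
    induction n with
    | zero =>
      intro b hle _
      exact absurd (le_trans (hgt_pos hidem b) hle) (by norm_num)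
    | succ n ih =>
      intro b hle r
      by_cases hb : b * x₀ = b ∧ x₀ * b = x₀
      · -- σ(b) = σ(x₀): use vanishing of f on B_{≥X}
        have hfb : f * MonoidAlgebra.single b r
            = ∑ a ∈ univ.filter (fun a => ¬ x₀ * a = x₀),
                MonoidAlgebra.single (a * b) (f.coeff a * r) := by
          rw [mul_single, ← Finset.sum_filter_add_sum_filter_not univ (fun a => x₀ * a = x₀)]
          have h1 : (∑ a ∈ univ.filter fun a => x₀ * a = x₀,
              MonoidAlgebra.single (a * b) (f.coeff a * r) : MonoidAlgebra k B) = 0 :=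
            Finset.sum_eq_zero fun a ha => by
              rw [vanish a (Finset.mem_filter.1 ha).2, zero_mul, MonoidAlgebra.single_zero]
          rw [h1, zero_add]
        have step1 : f * MonoidAlgebra.single b r * e
            = f * (f * MonoidAlgebra.single b r) * e := by
          rw [← mul_assoc f f, hf]
        rw [step1, hfb, Finset.mul_sum, Finset.sum_mul]
        refine Finset.sum_eq_zero fun a ha => ?_
        have hna : ¬ x₀ * a = x₀ := (Finset.mem_filter.1 ha).2
        have h1 : (a * b) * b = a * b := by rw [mul_assoc, hidem]
        have h2 : b * (a * b) ≠ b := by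
          intro hcon
          apply hna
          have hba : b * a = b := by
            have : b * a * b = b * a := hlrb b a
            rw [← mul_assoc] at hcon
            rw [this] at hcon
            exact hcon
          calc x₀ * a = (x₀ * b) * a := by rw [hb.2]
            _ = x₀ * (b * a) := mul_assoc _ _ _
            _ = x₀ * b := by rw [hba]
            _ = x₀ := hb.2
        exact ih (a * b) (Nat.lt_succ_iff.1 (lt_of_lt_of_le (hgt_lt hidem h1 h2) hle))
          (f.coeff a * r)
      · -- σ(b) ≠ σ(x₀): use θ(e) = 0 at b
        have hbe : MonoidAlgebra.single b r * e
            = ∑ a ∈ univ.filter (fun a => ¬ b * a = b),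
                MonoidAlgebra.single (b * a) (r * e.coeff a) := by
          rw [single_mul, ← Finset.sum_filter_add_sum_filter_not univ (fun a => b * a = b)]
          have h1 : (∑ a ∈ univ.filter fun a => b * a = b,
              MonoidAlgebra.single (b * a) (r * e.coeff a) : MonoidAlgebra k B) = 0 := by
            have heq : ∀ a ∈ univ.filter fun a => b * a = b,
                (MonoidAlgebra.single (b * a) (r * e.coeff a) : MonoidAlgebra k B)
                  = MonoidAlgebra.single b (r * e.coeff a) := fun a ha => by
              rw [(Finset.mem_filter.1 ha).2]
            rw [Finset.sum_congr rfl heq, ← single_sum, ← Finset.mul_sum,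
              hethaeta b, if_neg hb, mul_zero, MonoidAlgebra.single_zero]
          rw [h1, zero_add]
        have step1 : f * MonoidAlgebra.single b r * e
            = f * (MonoidAlgebra.single b r * e) * e := by
          conv_lhs => rw [← he]
          rw [← mul_assoc, mul_assoc f (MonoidAlgebra.single b r) e]
        rw [step1, hbe, Finset.mul_sum, Finset.sum_mul]
        refine Finset.sum_eq_zero fun a ha => ?_
        have hna : ¬ b * a = b := (Finset.mem_filter.1 ha).2
        have h1 : (b * a) * b = b * a := hlrb b a
        have h2 : b * (b * a) ≠ b := by
          rw [← mul_assoc, hidem]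
          exact fun hcon => hna hcon
        exact ih (b * a) (Nat.lt_succ_iff.1 (lt_of_lt_of_le (hgt_lt hidem h1 h2) hle))
          (r * e.coeff a)
  intro w
  conv_lhs => rw [decomp w, Finset.mul_sum, Finset.sum_mul]
  exact Finset.sum_eq_zero fun b _ => claimM (hgt b) b le_rfl (w.coeff b)
end

section
/- Let k be a field, B a finite left regular band (semigroup), x₀ ∈ B, and e ∈ kB an idempotent satisfying θ(e) = δ_{σ(x₀)}. Then for every b ∈ B with σ(b) = σ(x₀) (i.e. b*x₀ = b and x₀*b = x₀), there exist coefficients c : B → k, supported on {b′ ∈ B : b′*x₀ = b′, x₀*b′ ≠ x₀, b*b′ = b′, b′ ≠ b} (elements of support strictly below σ(x₀) that are strictly below b in the semigroup order), such that b*e = b + Σ_{b′} c(b′)·b′ in kB. -/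
theorem stmt9 (k B : Type*) [Field k] [Semigroup B] [Fintype B] [DecidableEq B]
    (hidem : ∀ x : B, x * x = x) (hlrb : ∀ x y : B, x * y * x = x * y)
    (x₀ : B) (e : MonoidAlgebra k B) (he : e * e = e) (htheta : ThetaDelta x₀ e)
    (b : B) (hb1 : b * x₀ = b) (hb2 : x₀ * b = x₀) :
    ∃ c : B → k,
      (∀ b' : B, c b' ≠ 0 →
        b' * x₀ = b' ∧ x₀ * b' ≠ x₀ ∧ b * b' = b' ∧ b' ≠ b) ∧
      MonoidAlgebra.single b (1 : k) * e =
        MonoidAlgebra.single b 1 + ∑ b' : B, c b' • MonoidAlgebra.single b' (1 : k) := by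
  classical
  set f := MonoidAlgebra.single b (1 : k) * e with hf
  have key : ∀ x : B, f.coeff x = ∑ a ∈ Finset.univ.filter (fun a => b * a = x), e.coeff a := by
    intro x
    rw [hf, MonoidAlgebra.coeff_mul, MonoidAlgebra.coeff_single, Finsupp.sum_single_index (by simp)]
    rw [Finsupp.sum_fintype _ _ (by intro a; simp)]
    simp [Finset.sum_filter]
  have hco_b : f.coeff b = 1 := by
    rw [key b, htheta b]
    simp [hb1, hb2]
  have hsupp : ∀ x : B, f.coeff x ≠ 0 → b * x = x ∧ x * x₀ = x := by
    intro x hx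
    rw [key x] at hx
    obtain ⟨a, ha, -⟩ := Finset.exists_ne_zero_of_sum_ne_zero hx
    rw [Finset.mem_filter] at ha
    obtain ⟨-, ha⟩ := ha
    subst ha
    constructor
    · rw [← mul_assoc, hidem]
    · calc b * a * x₀ = b * x₀ * a * x₀ := by rw [hb1]
        _ = b * (x₀ * a * x₀) := by rw [mul_assoc, mul_assoc, mul_assoc]
        _ = b * (x₀ * a) := by rw [hlrb]
        _ = b * x₀ * a := by rw [mul_assoc]
        _ = b * a := by rw [hb1]
  refine ⟨fun x => if x = b then 0 else f.coeff x, ?_, ?_⟩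
  · intro x hx
    have hxb : x ≠ b := by intro h; simp [h] at hx
    have hfx : f.coeff x ≠ 0 := by simpa [hxb] using hx
    obtain ⟨h1, h2⟩ := hsupp x hfx
    refine ⟨h2, ?_, h1, hxb⟩
    intro hcon
    apply hxb
    have : b * x = b := by
      calc b * x = b * x₀ * x := by rw [hb1]
        _ = b * (x₀ * x) := by rw [mul_assoc]
        _ = b * x₀ := by rw [hcon]
        _ = b := hb1
    rw [← h1, this]
  · ext y
    rw [MonoidAlgebra.coeff_add, MonoidAlgebra.coeff_sum, Finsupp.add_apply, Finset.sum_apply']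
    have hterm : ∀ x : B, ((if x = b then 0 else f.coeff x) • MonoidAlgebra.single x (1 : k)).coeff y
        = if x = y then (if x = b then 0 else f.coeff x) else 0 := by
      intro x
      split_ifs <;> simp_all [MonoidAlgebra.single_apply]
    rw [Finset.sum_congr rfl (fun x _ => hterm x), Finset.sum_ite_eq' Finset.univ y]
    by_cases hy : y = b
    · subst hy
      simp [MonoidAlgebra.single_apply, hco_b]
    · simp [MonoidAlgebra.single_apply, hy, Ne.symm hy]
end

section
/- Let k be a field and B a finite left regular band monoid. Suppose E : B → kB is a family such that: E(b) = E(b′) whenever σ(b) = σ(b′); each E(b) is idempotent; E(b)*E(b′) = 0 whenever σ(b) ≠ σ(b′); Σ_{t∈T} E(t) = 1 for every support transversal T ⊆ B; and each E(b) satisfies θ(E(b)) = δ_{σ(b)}. Then the family (b*E(b))_{b ∈ B} is a k-basis of kB (linearly independent and spanning). -/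
theorem stmt10 (k B : Type*) [Field k] [Monoid B] [Fintype B] [DecidableEq B]
    (hidem : ∀ x : B, x * x = x) (hlrb : ∀ x y : B, x * y * x = x * y)
    (E : B → MonoidAlgebra k B)
    (hconst : ∀ b b' : B, sameSupp b b' → E b = E b')
    (hidemE : ∀ b : B, E b * E b = E b)
    (horth : ∀ b b' : B, ¬ sameSupp b b' → E b * E b' = 0)
    (hcomplete : ∀ T : Finset B, IsSuppTransversal T → ∑ t ∈ T, E t = 1)
    (htheta : ∀ b : B, ThetaDelta b (E b)) :
    LinearIndependent k (fun b : B => MonoidAlgebra.single b (1 : k) * E b) ∧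
    Submodule.span k (Set.range fun b : B => MonoidAlgebra.single b (1 : k) * E b) = ⊤ := by
  classical
  set f : B → MonoidAlgebra k B := fun b => MonoidAlgebra.single b (1 : k) * E b with hfdef
  -- coefficient formula for left multiplication by a basis element
  have hcoef : ∀ (b : B) (g : MonoidAlgebra k B) (c : B),
      (MonoidAlgebra.single b (1 : k) * g).coeff c
        = ∑ a ∈ Finset.univ.filter (fun a => b * a = c), g.coeff a := by
    intro b g c
    rw [MonoidAlgebra.coeff_mul, MonoidAlgebra.coeff_single, Finsupp.sum_single_index (by simp)]
    rw [Finset.sum_filter, Finsupp.sum,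
      Finset.sum_subset (Finset.subset_univ g.coeff.support)]
    · simp
    · intro a _ ha
      simp [Finsupp.notMem_support_iff.mp ha]
  -- diagonal coefficient is 1
  have hsub : ∀ (u w : MonoidAlgebra k B) (c : B), (u - w).coeff c = u.coeff c - w.coeff c :=
    fun u w c => by rw [MonoidAlgebra.coeff_sub, Finsupp.sub_apply]
  have hdiag : ∀ b : B, (f b).coeff b = 1 := by
    intro b
    have := htheta b b
    rw [if_pos ⟨hidem b, hidem b⟩] at this
    simpa [hfdef, hcoef] using this
  -- the strict relation capturing "strictly smaller support"
  set r : B → B → Prop := fun c b => c * b = c ∧ b * c ≠ b with hrdef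
  -- off-diagonal nonzero coefficients only below in `r`
  have hoff : ∀ b c : B, c ≠ b → (f b).coeff c ≠ 0 → r c b := by
    intro b c hne h0
    rw [hfdef] at h0
    simp only [hcoef] at h0
    obtain ⟨a, ha, -⟩ := Finset.exists_ne_zero_of_sum_ne_zero h0
    rw [Finset.mem_filter] at ha
    have hba : b * a = c := ha.2
    constructor
    · rw [← hba, hlrb]
    · rw [← hba, ← mul_assoc, hidem, hba]
      exact fun h => hne (hba ▸ (hba ▸ h : b * a = b))
  -- `r` is transitive and irreflexive, hence well-founded on the finite type
  have htrans : ∀ a b c : B, r a b → r b c → r a c := by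
    rintro a b c ⟨hab, hba⟩ ⟨hbc, hcb⟩
    refine ⟨by rw [← hab, mul_assoc, hbc], fun hca => ?_⟩
    exact hcb (by rw [← hca, mul_assoc, hab, hca])
  have hirrefl : ∀ a : B, ¬ r a a := fun a h => h.2 (hidem a)
  have hwf : WellFounded r := by
    have : IsTrans B r := ⟨htrans⟩
    have : IsIrrefl B r := ⟨hirrefl⟩
    exact Finite.wellFounded_of_trans_of_irrefl r
  -- every standard basis vector lies in the span of the family
  have hsingle : ∀ b : B,
      MonoidAlgebra.single b (1 : k) ∈ Submodule.span k (Set.range f) := by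
    intro b
    induction b using hwf.induction with
    | _ b IH =>
      set v : MonoidAlgebra k B := f b - MonoidAlgebra.single b (1 : k) with hv
      have hvmem : v ∈ Submodule.span k (Set.range f) := by
        have hvsum : v = ∑ c ∈ v.coeff.support, v.coeff c • MonoidAlgebra.single c (1 : k) := by
          conv_lhs => rw [← MonoidAlgebra.sum_coeff_single v]
          rw [Finsupp.sum]
          refine Finset.sum_congr rfl fun c _ => ?_
          rw [MonoidAlgebra.smul_single', mul_one]
        rw [hvsum]
        refine Submodule.sum_mem _ fun c hc => Submodule.smul_mem _ _ ?_
        have hvc : v.coeff c ≠ 0 := Finsupp.mem_support_iff.mp hc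
        have hcne : c ≠ b := by
          intro h
          subst h
          apply hvc
          rw [hv, hsub, hdiag c]; simp [MonoidAlgebra.single_apply]
        have hfbc : (f b).coeff c ≠ 0 := by
          intro h
          apply hvc
          rw [hv, hsub, h]; simp [MonoidAlgebra.single_apply, Ne.symm hcne]
        exact IH c (hoff b c hcne hfbc)
      have : MonoidAlgebra.single b (1 : k) = f b - v := (sub_sub_cancel (f b) (MonoidAlgebra.single b (1 : k))).symm
      rw [this]
      exact sub_mem (Submodule.subset_span ⟨b, rfl⟩) hvmem
  -- spanning
  have hspan : Submodule.span k (Set.range f) = ⊤ := by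
    rw [eq_top_iff]
    intro v _
    have hvsum : v = ∑ c ∈ v.coeff.support, v.coeff c • MonoidAlgebra.single c (1 : k) := by
      conv_lhs => rw [← MonoidAlgebra.sum_coeff_single v]
      rw [Finsupp.sum]
      refine Finset.sum_congr rfl fun c _ => ?_
      rw [MonoidAlgebra.smul_single', mul_one]
    rw [hvsum]
    exact Submodule.sum_mem _ fun c _ => Submodule.smul_mem _ _ (hsingle c)
  -- independence from spanning and dimension count
  have hcard : Fintype.card B = Module.finrank k (MonoidAlgebra k B) := by
    exact (Module.finrank_eq_card_basis
      (MonoidAlgebra.basis B k)).symm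
  exact ⟨linearIndependent_of_top_le_span_of_card_eq_finrank (le_of_eq hspan.symm) hcard,
    hspan⟩
end

section
/- Let k be a field, B a left regular band (semigroup), x₀ ∈ B (identified with its basis element of kB), and F ∈ kB with F*F = F, F*x₀ = F, and x₀*F = x₀. Then: (a) F*w*F = F*w for all w ∈ kB, so the left ideal F·kB = {F*w : w ∈ kB} equals F·kB·F and is a k-algebra with two-sided identity F; (b) the k-linear maps a ↦ x₀*a and u ↦ F*u restrict to mutually inverse bijections between F·kB and the k-linear span of {b ∈ B : x₀*b = b}, they are multiplicative ((x₀*a)*(x₀*a′) = x₀*(a*a′) for a, a′ ∈ F·kB), and they exchange F and x₀. In particular F·kB is isomorphic as a k-algebra to the span of B^{≤x₀} = {b : x₀*b = b}, which is a subalgebra of kB with identity x₀. -/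
/-!
Statement 11.  Let `k` be a field, `B` a left regular band (semigroup), `x₀ ∈ B`, and
`F ∈ kB` with `F*F = F`, `F*x₀ = F`, `x₀*F = x₀`.  Then (a) `F*w*F = F*w` for all `w`,
so the left ideal `F·kB` equals `F·kB·F` and is a `k`-algebra with two-sided identity
`F`; (b) the maps `a ↦ x₀*a` and `u ↦ F*u` restrict to mutually inverse multiplicative
bijections between `F·kB` and the span `S` of `B^{≤x₀} = {b : x₀*b = b}`, exchanging `F`
and `x₀`; in particular `F·kB ≅ S` as `k`-algebras, `S` being a subalgebra of `kB` with
identity `x₀`.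
-/

/-- The `k`-span of the basis elements `b` with `b ≤ x₀` in the semigroup order. -/
noncomputable def lowerSpan (k : Type*) [Field k] {B : Type*} [Semigroup B] (x₀ : B) :
    Submodule k (MonoidAlgebra k B) :=
  Submodule.span k
    {f : MonoidAlgebra k B | ∃ b : B, x₀ * b = b ∧ f = MonoidAlgebra.single b 1}

theorem stmt11 (k B : Type*) [Field k] [Semigroup B]
    (hidem : ∀ x : B, x * x = x) (hlrb : ∀ x y : B, x * y * x = x * y)
    (x₀ : B) (F : MonoidAlgebra k B)
    (hFF : F * F = F)
    (hFx : F * MonoidAlgebra.single x₀ (1 : k) = F)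
    (hxF : MonoidAlgebra.single x₀ (1 : k) * F = MonoidAlgebra.single x₀ 1) :
    -- (a) `F*w*F = F*w`, and `F` is a two-sided identity of the left ideal `F·kB`
    (∀ w : MonoidAlgebra k B, F * w * F = F * w) ∧
    (∀ w : MonoidAlgebra k B, F * (F * w) = F * w) ∧
    -- (b) `a ↦ x₀*a` maps `F·kB` into the span `S` of `B^{≤x₀}` ...
    (∀ w : MonoidAlgebra k B,
      MonoidAlgebra.single x₀ (1 : k) * (F * w) ∈ lowerSpan k x₀) ∧
    -- ... and `u ↦ F*u` is a two-sided inverse to it: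
    (∀ w : MonoidAlgebra k B,
      F * (MonoidAlgebra.single x₀ (1 : k) * (F * w)) = F * w) ∧
    (∀ a ∈ lowerSpan k x₀, MonoidAlgebra.single x₀ (1 : k) * (F * a) = a) ∧
    -- multiplicativity of `a ↦ x₀*a` on `F·kB`:
    (∀ w w' : MonoidAlgebra k B,
      (MonoidAlgebra.single x₀ (1 : k) * (F * w)) *
          (MonoidAlgebra.single x₀ (1 : k) * (F * w')) =
        MonoidAlgebra.single x₀ (1 : k) * ((F * w) * (F * w'))) ∧
    -- `S` is a subalgebra of `kB` (closed under multiplication) with identity `x₀`: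
    (∀ a ∈ lowerSpan k x₀,
      MonoidAlgebra.single x₀ (1 : k) * a = a ∧ a * MonoidAlgebra.single x₀ (1 : k) = a) ∧
    (∀ a ∈ lowerSpan k x₀, ∀ a' ∈ lowerSpan k x₀, a * a' ∈ lowerSpan k x₀) := by

  classical
  set X := MonoidAlgebra.single x₀ (1 : k) with hX
  -- basic facts
  have hss : ∀ a b : B, (MonoidAlgebra.single a (1:k)) * MonoidAlgebra.single b 1
      = MonoidAlgebra.single (a*b) 1 := by
    intro a b; rw [MonoidAlgebra.single_mul_single, one_mul]
  have hcx : ∀ c : B, x₀ * c = c → c * x₀ = c := by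
    intro c hc
    conv_lhs => rw [← hc]
    rw [hlrb, hc]
  -- L0 : c ≤ x₀ implies single c 1 * F = single c 1
  have L0 : ∀ c : B, x₀ * c = c → (MonoidAlgebra.single c (1:k)) * F
      = MonoidAlgebra.single c 1 := by
    intro c hc
    have h1 : (MonoidAlgebra.single c (1:k)) * X = MonoidAlgebra.single c 1 := by
      rw [hX, hss, hcx c hc]
    calc (MonoidAlgebra.single c (1:k)) * F
        = (MonoidAlgebra.single c (1:k)) * X * F := by rw [h1]
      _ = (MonoidAlgebra.single c (1:k)) * (X * F) := mul_assoc _ _ _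
      _ = MonoidAlgebra.single c 1 * X := by rw [hxF]
      _ = MonoidAlgebra.single c 1 := h1
  -- single b r decomposition
  have hsmul : ∀ (b : B) (r : k), (MonoidAlgebra.single b r : MonoidAlgebra k B)
      = r • MonoidAlgebra.single b 1 := by
    intro b r; rw [MonoidAlgebra.smul_single', mul_one]
  -- X * single b r
  have hXs : ∀ (b : B) (r : k), X * MonoidAlgebra.single b r
      = r • MonoidAlgebra.single (x₀ * b) 1 := by
    intro b r
    rw [hsmul b r, mul_smul_comm, hX, hss]
  -- L1 : X*w*F = X*w
  have L1 : ∀ w : MonoidAlgebra k B, X * w * F = X * w := by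
    intro w
    induction w using MonoidAlgebra.induction with
    | zero => simp
    | single_add b r f _ _ ih =>
      have hb : (MonoidAlgebra.single b r : MonoidAlgebra k B) = MonoidAlgebra.single b r := rfl
      rw [hb, mul_add, add_mul, ih, hXs, smul_mul_assoc,
        L0 (x₀ * b) (by rw [← mul_assoc, hidem])]
  -- L4 : X*w*X = X*w
  have L4 : ∀ w : MonoidAlgebra k B, X * w * X = X * w := by
    intro w
    induction w using MonoidAlgebra.induction with
    | zero => simp
    | single_add b r f _ _ ih =>
      have hb : (MonoidAlgebra.single b r : MonoidAlgebra k B) = MonoidAlgebra.single b r := rfl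
      rw [hb, mul_add, add_mul, ih, hXs, smul_mul_assoc, hX, hss, hlrb]
  -- L2 : X*w ∈ lowerSpan
  have L2 : ∀ w : MonoidAlgebra k B, X * w ∈ lowerSpan k x₀ := by
    intro w
    induction w using MonoidAlgebra.induction with
    | zero => simp [lowerSpan]
    | single_add b r f _ _ ih =>
      have hb : (MonoidAlgebra.single b r : MonoidAlgebra k B) = MonoidAlgebra.single b r := rfl
      rw [hb, mul_add]
      refine Submodule.add_mem _ ?_ ih
      rw [hXs]
      refine Submodule.smul_mem _ r (Submodule.subset_span ?_)
      exact ⟨x₀ * b, by rw [← mul_assoc, hidem], rfl⟩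
  -- L3 : a ∈ lowerSpan → X*a = a
  have L3 : ∀ a ∈ lowerSpan k x₀, X * a = a := by
    intro a ha
    induction ha using Submodule.span_induction with
    | mem f hf =>
      obtain ⟨b, hb, rfl⟩ := hf
      rw [hX, hss, hb]
    | zero => simp
    | add u v _ _ hu hv => rw [mul_add, hu, hv]
    | smul r u _ hu => rw [mul_smul_comm, hu]
  -- L3' : a ∈ lowerSpan → a*X = a
  have L3' : ∀ a ∈ lowerSpan k x₀, a * X = a := by
    intro a ha
    induction ha using Submodule.span_induction with
    | mem f hf =>
      obtain ⟨b, hb, rfl⟩ := hf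
      rw [hX, hss, hcx b hb]
    | zero => simp
    | add u v _ _ hu hv => rw [add_mul, hu, hv]
    | smul r u _ hu => rw [smul_mul_assoc, hu]
  -- (a)
  have parta : ∀ w : MonoidAlgebra k B, F * w * F = F * w := by
    intro w
    calc F * w * F = F * X * w * F := by rw [hFx]
      _ = F * (X * w * F) := by rw [mul_assoc, mul_assoc, mul_assoc]
      _ = F * (X * w) := by rw [L1]
      _ = F * X * w := by rw [mul_assoc]
      _ = F * w := by rw [hFx]
  refine ⟨parta, ?_, ?_, ?_, ?_, ?_, ?_, ?_⟩
  · intro w; rw [← mul_assoc, hFF]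
  · intro w; exact L2 (F * w)
  · intro w
    calc F * (X * (F * w)) = F * X * (F * w) := by rw [mul_assoc]
      _ = F * (F * w) := by rw [hFx]
      _ = F * w := by rw [← mul_assoc, hFF]
  · intro a ha
    calc X * (F * a) = X * F * a := by rw [mul_assoc]
      _ = X * a := by rw [hX, hxF]
      _ = a := L3 a ha
  · intro w w'
    calc X * (F * w) * (X * (F * w')) = X * (F * w) * X * (F * w') :=
        (mul_assoc (X * (F * w)) X (F * w')).symm
      _ = X * (F * w) * (F * w') := by rw [L4]
      _ = X * (F * w * (F * w')) := by rw [mul_assoc]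
  · intro a ha; exact ⟨L3 a ha, L3' a ha⟩
  · intro a ha a' ha'
    have : a * a' = X * (a * a') := by rw [← mul_assoc, L3 a ha]
    rw [this]; exact L2 _
end

section
/- Let B be a left regular band and y, z ∈ B with y*z = y (i.e. σ(y) ≤ σ(z)). Then the maps x ↦ z*x and w ↦ y*w restrict to mutually inverse bijections between B^{<y} := {x ∈ B : y*x = x and x ≠ y} and B^{<z*y} := {w ∈ B : (z*y)*w = w and w ≠ z*y}, and moreover (z*x)*(z*x′) = z*(x*x′) for all x, x′ ∈ B. Hence left multiplication by z is a semigroup isomorphism (and in particular an order isomorphism for the semigroup order) from B^{<y} onto B^{<z*y}. -/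
/-!
Statement 12.  Let `B` be a left regular band and `y, z ∈ B` with `y*z = y`
(i.e. `σ(y) ≤ σ(z)`).  Then `x ↦ z*x` and `w ↦ y*w` restrict to mutually inverse
bijections between `B^{<y} = {x : y*x = x, x ≠ y}` and `B^{<z*y}`, and moreover
`(z*x)*(z*x′) = z*(x*x′)` for all `x, x′ ∈ B`; hence left multiplication by `z` is a
semigroup (and poset) isomorphism from `B^{<y}` onto `B^{<z*y}`.
-/

theorem stmt12 (B : Type*) [Semigroup B]
    (hidem : ∀ x : B, x * x = x) (hlrb : ∀ x y : B, x * y * x = x * y)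
    (y z : B) (hyz : y * z = y) :
    -- `x ↦ z*x` maps `B^{<y}` into `B^{<z*y}`:
    (∀ x : B, y * x = x → x ≠ y → ((z * y) * (z * x) = z * x ∧ z * x ≠ z * y)) ∧
    -- `w ↦ y*w` maps `B^{<z*y}` into `B^{<y}`:
    (∀ w : B, (z * y) * w = w → w ≠ z * y → (y * (y * w) = y * w ∧ y * w ≠ y)) ∧
    -- the two maps are mutually inverse:
    (∀ x : B, y * x = x → x ≠ y → y * (z * x) = x) ∧
    (∀ w : B, (z * y) * w = w → w ≠ z * y → z * (y * w) = w) ∧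
    -- left multiplication by `z` is multiplicative:
    (∀ x x' : B, (z * x) * (z * x') = z * (x * x')) := by
  refine ⟨?_, ?_, ?_, ?_, ?_⟩
  · intro x hx hxy
    constructor
    · calc (z * y) * (z * x) = (z * y * z) * x := by rw [← mul_assoc]
        _ = (z * y) * x := by rw [hlrb]
        _ = z * (y * x) := by rw [mul_assoc]
        _ = z * x := by rw [hx]
    · intro h
      apply hxy
      have : y * (z * x) = y * (z * y) := by rw [h]
      rw [← mul_assoc, ← mul_assoc, hyz, hx, hidem] at this
      exact this
  · intro w hw hwzy
    constructor
    · rw [← mul_assoc, hidem]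
    · intro h
      apply hwzy
      have : z * (y * w) = z * y := by rw [h]
      rw [← mul_assoc, hw] at this
      exact this
  · intro x hx _
    rw [← mul_assoc, hyz, hx]
  · intro w hw _
    rw [← mul_assoc, hw]
  · intro x x'
    calc (z * x) * (z * x') = ((z * x * z) * x') := by rw [← mul_assoc]
      _ = (z * x) * x' := by rw [hlrb]
      _ = z * (x * x') := by rw [mul_assoc]
end

section
/- Let L be a join-semilattice. For finite strictly increasing sequences (lists) y = (Y₁ < ⋯ < Y_ℓ) and x = (X₁ < ⋯ < X_k) in L, define the product y·x to be x when y is empty, and otherwise the sequence (Y₁, …, Y_ℓ, Y_ℓ ∨ X₁, …, Y_ℓ ∨ X_k) with consecutive repeated entries deleted. Then y·x = x if and only if y is a prefix of x (i.e. ℓ ≤ k and Y_i = X_i for all i ≤ ℓ). -/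
/-!
Statement 14.  Let `L` be a join-semilattice.  For strictly increasing lists
`y = (Y₁ < ⋯ < Y_ℓ)` and `x = (X₁ < ⋯ < X_k)` in `L`, define `y·x` to be `x` when `y`
is empty, and otherwise `(Y₁, …, Y_ℓ, Y_ℓ ∨ X₁, …, Y_ℓ ∨ X_k)` with consecutive repeated
entries deleted.  Then `y·x = x` if and only if `y` is a prefix of `x`.
-/

/-- The product in Brown's left regular band of partial flags: append the joins with the
last entry of `y` and delete (consecutive) repeated entries. -/
def flagMul {L : Type*} [SemilatticeSup L] [DecidableEq L] (y x : List L) : List L :=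
  match y.getLast? with
  | none => x
  | some Yl => List.destutter (· ≠ ·) (y ++ x.map (fun X => Yl ⊔ X))

section aux

variable {α : Type*} (R : α → α → Prop) [DecidableRel R]

/-- `destutter'` always starts with its seed. -/
lemma destutter'_head : ∀ (l : List α) (a : α), ∃ t, l.destutter' R a = a :: t := by
  intro l
  induction l with
  | nil => intro a; exact ⟨[], rfl⟩
  | cons b l ih =>
    intro a
    rw [List.destutter'_cons]
    by_cases h : R a b
    · exact ⟨_, if_pos h⟩
    · rw [if_neg h]; exact ih a

/-- Destuttering a list with a chain'-prefix. -/
lemma destutter_append_chain' : ∀ (y : List α) (hy : y ≠ []) (w : List α),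
    y.Chain' R → (y ++ w).destutter R = y.dropLast ++ w.destutter' R (y.getLast hy) := by
  intro y
  induction y with
  | nil => intro h; exact absurd rfl h
  | cons a y ih =>
    intro _ w hc
    cases y with
    | nil => simp [List.destutter_cons']
    | cons b y =>
      have hab : R a b := hc.rel_head
      have : ((a :: b :: y) ++ w).destutter R = a :: ((b :: y) ++ w).destutter R := by
        rw [List.cons_append, List.destutter_cons', List.cons_append,
          List.destutter'_cons_pos _ hab, ← List.destutter_cons']
      rw [this, ih (by simp) w hc.tail]
      simp [List.getLast]

/-- Dropping seed-equal elements. -/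
lemma destutter'_append_eq (a : α) : ∀ (l w : List α), (∀ b ∈ l, ¬ R a b) →
    (l ++ w).destutter' R a = w.destutter' R a := by
  intro l
  induction l with
  | nil => intro w _; rfl
  | cons b l ih =>
    intro w h
    rw [List.cons_append, List.destutter'_cons_neg _ (h b (by simp)), ih w]
    intro c hc; exact h c (by simp [hc])

end aux

theorem stmt14 {L : Type*} [SemilatticeSup L] [DecidableEq L] (y x : List L)
    (hy : y.Chain' (· < ·)) (hx : x.Chain' (· < ·)) :
    flagMul y x = x ↔ y <+: x := by
  rcases eq_or_ne y [] with rfl | hne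
  · simp [flagMul]
  · set Yl := y.getLast hne with hYl
    have hgl : y.getLast? = some Yl := List.getLast?_eq_getLast hne
    have hyne : y.Chain' (· ≠ ·) := hy.imp fun _ _ h => ne_of_lt h
    have hmul : flagMul y x =
        y.dropLast ++ (x.map (fun X => Yl ⊔ X)).destutter' (· ≠ ·) Yl := by
      rw [flagMul, hgl]
      exact destutter_append_chain' _ y hne _ hyne
    obtain ⟨t, ht⟩ := destutter'_head (α := L) (· ≠ ·) (x.map (fun X => Yl ⊔ X)) Yl
    have hy' : y.dropLast ++ [Yl] = y := List.dropLast_append_getLast hne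
    constructor
    · intro h
      refine ⟨t, ?_⟩
      rw [← h, hmul, ht, ← hy']
      simp
    · rintro ⟨s, rfl⟩
      have hpw : (y ++ s).Pairwise (· < ·) := List.isChain_iff_pairwise.mp hx
      have hys : ∀ b ∈ y, ∀ c ∈ s, b < c := by
        rw [List.pairwise_append] at hpw
        exact hpw.2.2
      have hpwy : y.Pairwise (· < ·) := hpw.sublist (List.sublist_append_left _ _)
      have hble : ∀ b ∈ y, b ≤ Yl := by
        intro b hb
        rw [← hy'] at hpwy hb
        rcases List.mem_append.mp hb with h | h
        · exact le_of_lt ((List.pairwise_append.mp hpwy).2.2 b h Yl (by simp))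
        · simp only [List.mem_singleton] at h; simp [h]
      have hmapy : ∀ b ∈ y.map (fun X => Yl ⊔ X), ¬ Yl ≠ b := by
        intro b hb
        obtain ⟨c, hc, rfl⟩ := List.mem_map.mp hb
        simp [sup_eq_left.mpr (hble c hc)]
      have hmaps : s.map (fun X => Yl ⊔ X) = s := by
        conv_rhs => rw [← List.map_id s]
        apply List.map_congr_left
        intro c hc
        exact sup_eq_right.mpr (le_of_lt (hys Yl (List.getLast_mem hne) c hc))
      have hchain : s.Chain (· ≠ ·) Yl := by
        have hp : (Yl :: s).Pairwise (· < ·) := by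
          refine List.pairwise_cons.mpr ⟨fun c hc => hys Yl (List.getLast_mem hne) c hc, ?_⟩
          exact hpw.sublist (List.sublist_append_right _ _)
        have hc : s.Chain (· < ·) Yl := List.isChain_iff_pairwise.mpr hp
        exact List.IsChain.imp (fun _ _ h => ne_of_lt h) hc
      rw [hmul, List.map_append, hmaps, destutter'_append_eq _ Yl _ _ hmapy,
        List.destutter'_of_isChain_cons _ _ hchain, ← hy']
      simp
end

section
/- Let k be a commutative ring and L a finite meet-semilattice with a greatest element ⊤, regarded as a commutative monoid under the meet operation ∧ with identity ⊤. Then the k-linear map from the monoid algebra kL = MonoidAlgebra k L to the product algebra k^L (functions L → k with pointwise addition and multiplication) sending each basis element X ∈ L to the indicator function of the down-set {Y ∈ L : Y ≤ X} is an isomorphism of k-algebras (Solomon's isomorphism kL ≅ k^L). -/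
/-!
Statement 17 (Solomon's isomorphism).  Let `k` be a commutative ring and `L` a finite
meet-semilattice with greatest element `⊤`, regarded as a commutative monoid under the
meet operation with identity `⊤`.  Then the `k`-linear map `kL → k^L` sending each basis
element `X` to the indicator function of `{Y : Y ≤ X}` is an isomorphism of
`k`-algebras.
-/

theorem stmt17 (k L : Type*) [CommRing k] [Fintype L] [SemilatticeInf L] [OrderTop L]
    [DecidableRel ((· ≤ ·) : L → L → Prop)] [CommMonoid L]
    (hmul : ∀ a b : L, a * b = a ⊓ b) (hone : (1 : L) = ⊤) :
    ∃ e : MonoidAlgebra k L ≃ₐ[k] (L → k),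
      ∀ X : L, e (MonoidAlgebra.single X 1) = fun Y => if Y ≤ X then (1 : k) else 0 := by
  classical
  -- the multiplicative map sending `X` to the indicator of `{Y : Y ≤ X}`
  let φ : L →* (L → k) :=
  { toFun := fun X Y => if Y ≤ X then 1 else 0
    map_one' := by funext Y; simp [hone]
    map_mul' := by
      intro a b
      funext Y
      simp only [Pi.mul_apply, hmul, le_inf_iff]
      by_cases h1 : Y ≤ a <;> by_cases h2 : Y ≤ b <;> simp [h1, h2] }
  let F : MonoidAlgebra k L →ₐ[k] (L → k) := MonoidAlgebra.lift k (L → k) L φ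
  have hFsingle : ∀ (X : L) (c : k), F (MonoidAlgebra.single X c) = c • φ X := by
    intro X c
    simp [F, MonoidAlgebra.lift_single]
  -- the matrix of `F` in the standard bases
  let M : Matrix L L k := fun Y X => if Y ≤ X then 1 else 0
  -- `F` agrees with multiplication by `M`
  have hF : F.toLinearMap =
      (M.mulVecLin).comp ((Finsupp.linearEquivFunOnFinite k k L).toLinearMap.comp
        (MonoidAlgebra.coeffLinearEquiv k).toLinearMap) := by
    apply MonoidAlgebra.lhom_ext'
    intro X
    refine LinearMap.ext fun c => ?_
    have h1 : ((Finsupp.linearEquivFunOnFinite k k L) (Finsupp.single X c)) =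
        Pi.single X c := by
      ext Z
      simp [Finsupp.single_apply, Pi.single_apply,
        eq_comm]
    show F (MonoidAlgebra.single X c)
        = M.mulVecLin ((Finsupp.linearEquivFunOnFinite k k L) (Finsupp.single X c))
    rw [hFsingle, h1]
    funext Y
    rw [Matrix.mulVecLin_apply, Matrix.mulVec_single]
    simp [M, φ, mul_comm, Matrix.col, Matrix.transpose, Matrix.of_apply]
  -- `M` is invertible: it is unitriangular with respect to a linear extension
  letI : Fintype (LinearExtension L) := ‹Fintype L›
  have hdet : IsUnit M.det := by
    let σ : L ≃ LinearExtension L :=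
      { toFun := toLinearExtension
        invFun := fun a => (show L from a)
        left_inv := fun a => rfl
        right_inv := fun a => rfl }
    have hσ : ∀ a b : L, a ≤ b → σ a ≤ σ b := fun a b h => by
      have h3 : (toLinearExtension a : LinearExtension L) ≤ toLinearExtension b :=
        toLinearExtension.monotone' h
      exact h3
    let M' : Matrix (LinearExtension L) (LinearExtension L) k :=
      M.submatrix σ.symm σ.symm
    have htri : M'.BlockTriangular id := by
      intro i j hij
      simp only [M', Matrix.submatrix, Matrix.of_apply, M, ite_eq_right_iff]
      intro hle
      exact absurd (hσ _ _ hle) (by simpa using hij.not_ge)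
    have hdet' : M'.det = 1 := by
      rw [Matrix.det_of_upperTriangular htri]
      simp [M', M, Matrix.submatrix]
    have : M.det = M'.det := (Matrix.det_submatrix_equiv_self σ.symm M).symm
    rw [this, hdet']
    exact isUnit_one
  have hMinv : Invertible M := M.invertibleOfIsUnitDet hdet
  -- hence `F` is bijective
  have hbij : Function.Bijective F := by
    have h1 : Function.Bijective (M.mulVecLin) := by
      have := (Matrix.toLinearEquiv' M hMinv).bijective
      convert this using 1
      rfl
    have h2 : Function.Bijective ((Finsupp.linearEquivFunOnFinite k k L).toLinearMap.comp
        (MonoidAlgebra.coeffLinearEquiv k).toLinearMap) :=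
      ((MonoidAlgebra.coeffLinearEquiv k).trans (Finsupp.linearEquivFunOnFinite k k L)).bijective
    have : Function.Bijective (F.toLinearMap) := by
      rw [hF]
      exact h1.comp h2
    exact this
  refine ⟨AlgEquiv.ofBijective F hbij, fun X => ?_⟩
  show F (MonoidAlgebra.single X 1) = _
  rw [hFsingle]
  funext Y
  simp [φ]
end

section
/- Let k be a field and B a finite left regular band monoid. The k-linear map θ : kB → k^B sending each basis element b ∈ B to the function c ↦ (1 if c*b = c, else 0) is a homomorphism of unital k-algebras, and its kernel equals the Jacobson radical of kB. Consequently kB modulo its Jacobson radical is isomorphic to a finite product of copies of k, indexed by the support semilattice Λ(B). -/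
/-!
The indicator functions `c ↦ [c * b = c]` multiply like the elements `b`, because in a left
regular band `c * (a * b) = c` holds exactly when `c * a = c` and `c * b = c`; so `θ` is an
algebra map into the split semisimple algebra `k^B`, and the Jacobson radical lies in its kernel.
Conversely, if `θ x = 0` then for each `p ∈ B` the product `p * x` is a combination of elements
`p * b ≠ p`, which lie strictly below `p` in the support order; hence `x ^ |B| = 0`, so the
kernel of `θ` is a nil ideal and lies in the radical. Finally `θ` factors through the support
semilattice `Λ(B)`, where its image separates points, so it is onto `k^Λ(B)`.
-/

open Finset MonoidAlgebra

theorem Ideal.mem_jacobson_bot_of_forall_isNilpotent_mul {R : Type*} [Ring R] {x : R}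
    (h : ∀ y, IsNilpotent (y * x)) : x ∈ jacobson (⊥ : Ideal R) := by
  refine mem_jacobson_iff.mpr fun y => ?_
  obtain ⟨u, hu⟩ := (h y).isUnit_add_one
  refine ⟨↑u⁻¹, ?_⟩
  rw [Submodule.mem_bot, mul_assoc, ← mul_add_one, ← hu, Units.inv_mul, sub_self]

theorem Ideal.jacobson_bot_le_ker_of_pi {k R ι : Type*} [Field k] [Ring R] [Algebra k R]
    (f : R →ₐ[k] ι → k) : jacobson (⊥ : Ideal R) ≤ RingHom.ker f := by
  intro x hx
  rw [RingHom.mem_ker]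
  funext i
  let g := (Pi.evalAlgHom k (fun _ => k) i).comp f
  have : (RingHom.ker g).IsMaximal :=
    RingHom.ker_isMaximal_of_surjective g fun a => ⟨algebraMap k R a, g.commutes a⟩
  exact mem_sInf.mp hx ⟨bot_le, this⟩

theorem Subalgebra.eq_top_of_separatesPoints_pi {k ι : Type*} [Field k] [Finite ι]
    (A : Subalgebra k (ι → k)) (hA : ∀ i j, i ≠ j → ∃ f ∈ A, f i ≠ f j) :
    A = ⊤ := by
  classical
  have : Fintype ι := Fintype.ofFinite ι
  have hsep : ∀ i j, ∃ g ∈ A, g i = 1 ∧ (i ≠ j → g j = 0) := by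
    intro i j
    by_cases hij : i = j
    · exact ⟨1, A.one_mem, rfl, fun h => absurd hij h⟩
    obtain ⟨f, hf, hfij⟩ := hA i j hij
    refine ⟨(f i - f j)⁻¹ • (f - algebraMap k _ (f j)),
      A.smul_mem (A.sub_mem hf (A.algebraMap_mem _)) _, ?_, fun _ => by simp⟩
    simp [inv_mul_cancel₀ (sub_ne_zero.mpr hfij)]
  choose g hgA hgi hgj using hsep
  have hsingle : ∀ i, Pi.single i 1 ∈ A := by
    intro i
    have hprod : Pi.single i 1 = ∏ j, g i j := by
      funext x
      rw [Finset.prod_apply]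
      by_cases hx : x = i
      · subst hx
        simp [hgi]
      · rw [Pi.single_eq_of_ne hx]
        exact (prod_eq_zero (f := fun j => g i j x) (mem_univ x) (hgj i x (Ne.symm hx))).symm
    rw [hprod]
    exact A.prod_mem fun j _ => hgA i j
  refine eq_top_iff.mpr fun h _ => ?_
  rw [← Finset.univ_sum_single h]
  refine A.sum_mem fun i _ => ?_
  have := A.smul_mem (hsingle i) (h i)
  rwa [← Pi.single_smul', smul_eq_mul, mul_one] at this

structure IsLeftRegularBand (B : Type*) [Mul B] : Prop where
  mul_self : ∀ x : B, x * x = x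
  mul_mul_self : ∀ x y : B, x * y * x = x * y

/-- The support semilattice `Λ(B)`: `a` and `b` are identified when `σ(a) = σ(b)`. -/
abbrev SupportSemilattice (B : Type*) [Mul B] : Type _ :=
  Quot fun a b : B => a * b = a ∧ b * a = b

namespace IsLeftRegularBand

variable {B : Type*} [Monoid B]

theorem mul_mul_eq_self_iff (hB : IsLeftRegularBand B) {a b c : B} :
    c * (a * b) = c ↔ c * a = c ∧ c * b = c := by
  refine ⟨fun h => ⟨?_, ?_⟩, fun ⟨ha, hb⟩ => by rw [← mul_assoc, ha, hb]⟩
  · calc c * a = c * (a * b) * a := by rw [h]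
      _ = c * (a * b) := by rw [mul_assoc, hB.mul_mul_self]
      _ = c := h
  · calc c * b = c * (a * b) * b := by rw [h]
      _ = c * (a * b) := by rw [mul_assoc, mul_assoc, hB.mul_self]
      _ = c := h

variable [DecidableEq B]

section Semiring

variable (k : Type*) [CommSemiring k]

def supportIndicator (hB : IsLeftRegularBand B) : B →* (B → k) where
  toFun b c := if c * b = c then 1 else 0
  map_one' := by
    funext c
    simp
  map_mul' a b := by
    funext c
    simp only [Pi.mul_apply, hB.mul_mul_eq_self_iff]
    split_ifs <;> simp_all

/-- The map `θ : kB → k^B`. -/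
noncomputable def supportHom (hB : IsLeftRegularBand B) : MonoidAlgebra k B →ₐ[k] (B → k) :=
  lift k (B → k) B (hB.supportIndicator k)

theorem supportHom_single (hB : IsLeftRegularBand B) (b c : B) (r : k) :
    hB.supportHom k (single b r) c = if c * b = c then r else 0 := by
  simp [supportHom, supportIndicator]

theorem supportHom_apply_eq_of_rel (hB : IsLeftRegularBand B) (x : MonoidAlgebra k B)
    {c c' : B} (h : c * c' = c ∧ c' * c = c') : hB.supportHom k x c = hB.supportHom k x c' := by
  induction x using MonoidAlgebra.induction_linear with
  | zero => simp
  | add x y hx hy => simp only [map_add, Pi.add_apply, hx, hy]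
  | single b r =>
    have hiff : c * b = c ↔ c' * b = c' :=
      ⟨fun hcb => by rw [← h.2, mul_assoc, hcb], fun hcb => by rw [← h.1, mul_assoc, hcb]⟩
    simp only [supportHom_single, hiff]

noncomputable def supportQuotHom (hB : IsLeftRegularBand B) :
    MonoidAlgebra k B →ₐ[k] (SupportSemilattice B → k) :=
  AlgHom.pi fun q =>
    Quot.lift (fun c => (Pi.evalAlgHom k (fun _ => k) c).comp (hB.supportHom k))
      (fun _ _ h => AlgHom.ext fun x => hB.supportHom_apply_eq_of_rel k x h) q

theorem supportQuotHom_mk (hB : IsLeftRegularBand B) (x : MonoidAlgebra k B) (c : B) :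
    hB.supportQuotHom k x (Quot.mk _ c) = hB.supportHom k x c :=
  rfl

theorem ker_supportQuotHom (hB : IsLeftRegularBand B) :
    RingHom.ker (hB.supportQuotHom k) = RingHom.ker (hB.supportHom k) := by
  ext x
  simp only [RingHom.mem_ker, funext_iff, Pi.zero_apply]
  refine ⟨fun h c => h (Quot.mk _ c), fun h q => ?_⟩
  obtain ⟨c, rfl⟩ := Quot.mk_surjective q
  exact h c

end Semiring

variable [Fintype B]

theorem card_lt_of_mul_ne (hB : IsLeftRegularBand B) {p b : B} (h : p * b ≠ p) :
    #{c | c * (p * b) = c} < #{c | c * p = c} := by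
  refine card_lt_card ⟨fun c hc => ?_, fun hsub => h ?_⟩
  · simp only [mem_filter, mem_univ, true_and] at hc ⊢
    exact (hB.mul_mul_eq_self_iff.mp hc).1
  · have := hsub (by simp [hB.mul_self] : p ∈ ({c | c * p = c} : Finset B))
    simpa [← mul_assoc, hB.mul_self] using this

section Ring

variable {k : Type*} [CommRing k]

theorem single_mul_sub_mem_span (hB : IsLeftRegularBand B) (x : MonoidAlgebra k B) (p : B) :
    single p 1 * x - single p (hB.supportHom k x p) ∈
      Submodule.span k
        ((fun q => single q (1 : k)) '' {q | #{c | c * q = c} < #{c | c * p = c}}) := by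
  induction x using MonoidAlgebra.induction_linear with
  | zero => simp
  | add x y hx hy =>
    rw [mul_add, map_add, Pi.add_apply, single_add, add_sub_add_comm]
    exact add_mem hx hy
  | single b r =>
    rw [single_mul_single, one_mul, supportHom_single]
    by_cases h : p * b = p
    · simp [h]
    · rw [if_neg h, single_zero, sub_zero, ← mul_one r, ← smul_single']
      exact Submodule.smul_mem _ r (Submodule.subset_span ⟨p * b, hB.card_lt_of_mul_ne h, rfl⟩)

theorem single_mul_pow_eq_zero (hB : IsLeftRegularBand B) {x : MonoidAlgebra k B}
    (hx : hB.supportHom k x = 0) (n : ℕ) (p : B) (hp : #{c | c * p = c} ≤ n) :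
    single p (1 : k) * x ^ n = 0 := by
  induction n generalizing p with
  | zero =>
    have : 0 < #{c | c * p = c} := card_pos.mpr ⟨p, by simp [hB.mul_self]⟩
    omega
  | succ n ih =>
    have := hB.single_mul_sub_mem_span x p
    rw [hx, Pi.zero_apply, single_zero, sub_zero] at this
    rw [pow_succ', ← mul_assoc]
    refine (Submodule.span_le (p := LinearMap.ker (LinearMap.mulRight k (x ^ n)))).mpr ?_ this
    rintro _ ⟨q, hq, rfl⟩
    exact ih q (Nat.lt_succ_iff.mp (hq.trans_le hp))

theorem pow_card_eq_zero_of_supportHom_eq_zero (hB : IsLeftRegularBand B)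
    {x : MonoidAlgebra k B} (hx : hB.supportHom k x = 0) : x ^ Fintype.card B = 0 := by
  simpa [← one_def] using hB.single_mul_pow_eq_zero hx _ 1 (card_le_univ _)

end Ring

variable (k : Type*) [Field k]

theorem ker_supportHom (hB : IsLeftRegularBand B) :
    RingHom.ker (hB.supportHom k) = Ideal.jacobson ⊥ := by
  refine le_antisymm (fun x hx => Ideal.mem_jacobson_bot_of_forall_isNilpotent_mul fun y =>
    ⟨_, hB.pow_card_eq_zero_of_supportHom_eq_zero ?_⟩) (Ideal.jacobson_bot_le_ker_of_pi _)
  rw [map_mul, RingHom.mem_ker.mp hx, mul_zero]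

theorem supportQuotHom_surjective (hB : IsLeftRegularBand B) :
    Function.Surjective (hB.supportQuotHom k) := by
  refine (AlgHom.range_eq_top _).mp (Subalgebra.eq_top_of_separatesPoints_pi _ ?_)
  rintro ⟨c⟩ ⟨c'⟩ hne
  have hrel : ¬(c * c' = c ∧ c' * c = c') := fun h => hne (Quot.sound h)
  by_cases h : c * c' = c
  · have h' : c' * c ≠ c' := fun h' => hrel ⟨h, h'⟩
    refine ⟨_, ⟨single c 1, rfl⟩, ?_⟩
    simp [supportQuotHom_mk, supportHom_single, hB.mul_self, h']
  · refine ⟨_, ⟨single c' 1, rfl⟩, ?_⟩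
    simp [supportQuotHom_mk, supportHom_single, hB.mul_self, h]

end IsLeftRegularBand

theorem stmt18 (k B : Type*) [Field k] [Monoid B] [Fintype B] [DecidableEq B]
    (hidem : ∀ x : B, x * x = x) (hlrb : ∀ x y : B, x * y * x = x * y) :
    ∃ θ : MonoidAlgebra k B →ₐ[k] (B → k),
      (∀ b c : B, θ (MonoidAlgebra.single b 1) c = if c * b = c then (1 : k) else 0) ∧
      RingHom.ker θ = Ideal.jacobson (⊥ : Ideal (MonoidAlgebra k B)) ∧
      ∃ ψ : MonoidAlgebra k B →ₐ[k] ((Quot (fun a b : B => a * b = a ∧ b * a = b)) → k),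
        Function.Surjective ψ ∧
        RingHom.ker ψ = Ideal.jacobson (⊥ : Ideal (MonoidAlgebra k B)) := by
  have hB : IsLeftRegularBand B := ⟨hidem, hlrb⟩
  refine ⟨hB.supportHom k, fun b c => hB.supportHom_single k b c 1, hB.ker_supportHom k,
    hB.supportQuotHom k, hB.supportQuotHom_surjective k, ?_⟩
  rw [hB.ker_supportQuotHom k, hB.ker_supportHom k]
end
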